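/- arXiv:2510.05806 — 12 statements merged into one kernel-verified Lean document; each statement's English description precedes it below -/
import Mathlib

section
/- Let k ≥ 1 and let 𝒢 = (V, ℰ) be a directed k-path temporal graph. Then the family 𝒞 of all open temporal connected components of 𝒢 has VC-dimension at most 2k + 1; equivalently, no subset A ⊆ V with |A| = 2k + 2 is shattered by 𝒞. -/
/-- A directed temporal graph: a vertex set together with a set of temporal
edges `(u, v, t)` with `u ≠ v` and both endpoints in the vertex set. -/
structure TemporalGraph (V : Type*) where
  verts : Set V
  edges : Set (V × V × ℕ)
  edge_ne : ∀ e ∈ edges, e.1 ≠ e.2.1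
  edge_mem_fst : ∀ e ∈ edges, e.1 ∈ verts
  edge_mem_snd : ∀ e ∈ edges, e.2.1 ∈ verts

namespace TemporalGraph

variable {V : Type*}

/-- There is a strict temporal walk from `u` to `v` all of whose vertices lie in `X`. -/
def HasWalkWithin (G : TemporalGraph V) (X : Set V) (u v : V) : Prop :=
  ∃ (n : ℕ) (f : ℕ → V) (t : ℕ → ℕ),
    1 ≤ n ∧ f 0 = u ∧ f n = v ∧
    (∀ m, m < n → (f m, f (m + 1), t m) ∈ G.edges) ∧
    (∀ m m', m < m' → m' < n → t m < t m') ∧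
    (∀ m, m ≤ n → f m ∈ X)

/-- There is a strict temporal walk from `u` to `v`. -/
def HasWalk (G : TemporalGraph V) (u v : V) : Prop :=
  G.HasWalkWithin Set.univ u v

/-- `u` reaches `v`: either `u = v` or there is a strict temporal walk from `u` to `v`. -/
def Reaches (G : TemporalGraph V) (u v : V) : Prop :=
  u = v ∨ G.HasWalk u v

/-- `u` and `v` are compatible: each reaches the other. -/
def Compatible (G : TemporalGraph V) (u v : V) : Prop :=
  G.Reaches u v ∧ G.Reaches v u

/-- A set of vertices is temporally connected if its elements are pairwise compatible. -/
def TemporallyConnected (G : TemporalGraph V) (X : Set V) : Prop :=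
  ∀ u ∈ X, ∀ v ∈ X, G.Compatible u v

/-- A set of vertices is closed temporally connected if any two distinct members are
joined by a strict temporal walk staying inside the set, in both directions. -/
def ClosedTemporallyConnected (G : TemporalGraph V) (X : Set V) : Prop :=
  ∀ u ∈ X, ∀ v ∈ X, u ≠ v → G.HasWalkWithin X u v

/-- An open temporal connected component: an inclusion-maximal temporally connected
subset of the vertex set. -/
def IsOpenTCC (G : TemporalGraph V) (X : Set V) : Prop :=
  X ⊆ G.verts ∧ G.TemporallyConnected X ∧
    ∀ Y, Y ⊆ G.verts → G.TemporallyConnected Y → X ⊆ Y → X = Y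

/-- A closed temporal connected component: an inclusion-maximal closed temporally
connected subset of the vertex set. -/
def IsClosedTCC (G : TemporalGraph V) (X : Set V) : Prop :=
  X ⊆ G.verts ∧ G.ClosedTemporallyConnected X ∧
    ∀ Y, Y ⊆ G.verts → G.ClosedTemporallyConnected Y → X ⊆ Y → X = Y

end TemporalGraph

/-- Data of a temporal path: `len + 1` vertices `f 0, …, f len` and labels
`t 0, …, t (len - 1)` for the edges between consecutive vertices. -/
structure TPath (V : Type*) where
  len : ℕ
  f : ℕ → V
  t : ℕ → ℕ

namespace TPath

variable {V : Type*}

/-- `p` is a strict temporal path of `G`: it has at least one edge, consecutive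
vertices form temporal edges of `G`, labels strictly increase along the path, and
the visited vertices are pairwise distinct. -/
def IsPathIn (p : TPath V) (G : TemporalGraph V) : Prop :=
  1 ≤ p.len ∧
  (∀ m, m < p.len → (p.f m, p.f (m + 1), p.t m) ∈ G.edges) ∧
  (∀ m m', m < m' → m' < p.len → p.t m < p.t m') ∧
  (∀ m m', m ≤ p.len → m' ≤ p.len → p.f m = p.f m' → m = m')

/-- The temporal edges lying on the path `p`. -/
def edgeSet (p : TPath V) : Set (V × V × ℕ) :=
  {e | ∃ m, m < p.len ∧ e = (p.f m, p.f (m + 1), p.t m)}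

/-- The vertices occurring on the path `p`. -/
def vertexSet (p : TPath V) : Set V :=
  {v | ∃ m, m ≤ p.len ∧ v = p.f m}

end TPath

/-- `P` is a family of defining paths for `G`: each `P i` is a strict temporal path
of `G`, and every temporal edge of `G` lies on exactly one of the paths. -/
def TemporalGraph.IsPathDecomp {V : Type*} (G : TemporalGraph V) {k : ℕ}
    (P : Fin k → TPath V) : Prop :=
  (∀ i, (P i).IsPathIn G) ∧ ∀ e ∈ G.edges, ∃! i : Fin k, e ∈ (P i).edgeSet

/-- `G` is a `k`-path temporal graph. -/
def TemporalGraph.IsKPathGraph {V : Type*} (G : TemporalGraph V) (k : ℕ) : Prop :=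
  ∃ P : Fin k → TPath V, G.IsPathDecomp P


namespace TemporalVC

variable {V : Type*}

/-- One temporal edge can be followed by another on a strict temporal walk. -/
def Step (G : TemporalGraph V) (e e' : V × V × ℕ) : Prop :=
  e ∈ G.edges ∧ e' ∈ G.edges ∧ e.2.1 = e'.1 ∧ e.2.2 < e'.2.2

/-- Edge `e'` is reachable from edge `e` along a strict temporal walk. -/
def EdgeLE (G : TemporalGraph V) : (V × V × ℕ) → (V × V × ℕ) → Prop :=
  Relation.ReflTransGen (Step G)

/-- There is a strict temporal walk starting at `u` whose last edge is `e`. -/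
inductive WalkEnd (G : TemporalGraph V) : V → (V × V × ℕ) → Prop
  | single (e : V × V × ℕ) (he : e ∈ G.edges) : WalkEnd G e.1 e
  | cons (u : V) (e e' : V × V × ℕ) (h : WalkEnd G u e) (hs : Step G e e') : WalkEnd G u e'

/-- There is a strict temporal walk ending at `v` whose first edge is `e`. -/
inductive WalkStart (G : TemporalGraph V) : (V × V × ℕ) → V → Prop
  | single (e : V × V × ℕ) (he : e ∈ G.edges) : WalkStart G e e.2.1
  | cons (e e' : V × V × ℕ) (v : V) (hs : Step G e e') (h : WalkStart G e' v) : WalkStart G e v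

lemma WalkEnd.mem {G : TemporalGraph V} {u : V} {e : V × V × ℕ}
    (h : WalkEnd G u e) : e ∈ G.edges := by
  cases h with
  | single e he => exact he
  | cons u e e' h hs => exact hs.2.1


lemma WalkStart.mem {G : TemporalGraph V} {v : V} {e : V × V × ℕ}
    (h : WalkStart G e v) : e ∈ G.edges := by
  cases h with
  | single e he => exact he
  | cons e e' v hs h => exact hs.1

lemma walkEnd_single' {G : TemporalGraph V} {u : V} {e : V × V × ℕ}
    (he : e ∈ G.edges) (hu : e.1 = u) : WalkEnd G u e :=
  hu ▸ WalkEnd.single e he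

lemma walkStart_single' {G : TemporalGraph V} {v : V} {e : V × V × ℕ}
    (he : e ∈ G.edges) (hv : e.2.1 = v) : WalkStart G e v :=
  hv ▸ WalkStart.single e he

lemma WalkEnd.le {G : TemporalGraph V} {u : V} {e e' : V × V × ℕ}
    (h : WalkEnd G u e) (hle : EdgeLE G e e') : WalkEnd G u e' := by
  induction hle with
  | refl => exact h
  | tail _ hs ih => exact WalkEnd.cons u _ _ ih hs

lemma WalkStart.le {G : TemporalGraph V} {v : V} {e e' : V × V × ℕ}
    (hle : EdgeLE G e e') (h : WalkStart G e' v) : WalkStart G e v := by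
  induction hle using Relation.ReflTransGen.head_induction_on with
  | refl => exact h
  | head hs _ ih => exact WalkStart.cons _ _ _ hs ih

lemma walkEnd_of_hasWalk {G : TemporalGraph V} {u v : V} (h : G.HasWalk u v) :
    ∃ e : V × V × ℕ, WalkEnd G u e ∧ e.2.1 = v := by
  obtain ⟨n, f, t, h1, hf0, hfn, hed, hmono, -⟩ := h
  have key : ∀ m, m < n → WalkEnd G u (f m, f (m + 1), t m) := by
    intro m
    induction m with
    | zero => exact fun h0 => walkEnd_single' (hed 0 h0) hf0
    | succ m ih =>
        intro hm
        exact WalkEnd.cons u _ _ (ih (by omega))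
          ⟨hed m (by omega), hed (m + 1) hm, rfl, hmono m (m + 1) (by omega) hm⟩
  have hn : n - 1 + 1 = n := by omega
  have h2 := key (n - 1) (by omega)
  rw [hn] at h2
  exact ⟨(f (n - 1), f n, t (n - 1)), h2, hfn⟩

lemma walkStart_of_hasWalk {G : TemporalGraph V} {u v : V} (h : G.HasWalk u v) :
    ∃ e : V × V × ℕ, WalkStart G e v ∧ e.1 = u := by
  obtain ⟨n, f, t, h1, hf0, hfn, hed, hmono, -⟩ := h
  have key : ∀ d, d < n → WalkStart G (f (n - 1 - d), f (n - 1 - d + 1), t (n - 1 - d)) (f n) := by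
    intro d
    induction d with
    | zero =>
        intro h0
        refine walkStart_single' (hed (n - 1) (by omega)) ?_
        show f (n - 1 + 1) = f n
        congr 1
        omega
    | succ d ih =>
        intro hd
        have hm : n - 1 - d = (n - 1 - (d + 1)) + 1 := by omega
        have hih := ih (by omega)
        rw [hm] at hih
        refine WalkStart.cons _ _ _ ?_ hih
        refine ⟨hed _ (by omega), hed _ (by omega), rfl, hmono _ _ (by omega) (by omega)⟩
  have h2 := key (n - 1) (by omega)
  have hz : n - 1 - (n - 1) = 0 := by omega
  rw [hz] at h2
  rw [hfn] at h2
  exact ⟨(f 0, f 1, t 0), h2, hf0⟩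

end TemporalVC

namespace TemporalVC

variable {V : Type*}

lemma WalkEnd.exists_walk {G : TemporalGraph V} {u : V} {e : V × V × ℕ}
    (h : WalkEnd G u e) :
    ∃ (n : ℕ) (f : ℕ → V) (t : ℕ → ℕ), 1 ≤ n ∧ f 0 = u ∧ f n = e.2.1 ∧
      (∀ m, m < n → (f m, f (m + 1), t m) ∈ G.edges) ∧
      (∀ m m', m < m' → m' < n → t m < t m') ∧ t (n - 1) = e.2.2 := by
  induction h with
  | single e he =>
      refine ⟨1, fun m => if m = 0 then e.1 else e.2.1, fun _ => e.2.2, le_refl 1,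
        by simp, by simp, ?_, by omega, rfl⟩
      intro m hm
      have hm0 : m = 0 := by omega
      subst hm0
      simpa using he
  | cons u e e' h hs ih =>
      obtain ⟨n, f, t, h1, hf0, hfn, hed, hmono, hlast⟩ := ih
      refine ⟨n + 1, fun m => if m = n + 1 then e'.2.1 else f m,
        fun m => if m = n then e'.2.2 else t m, by omega, ?_, by simp, ?_, ?_, by simp⟩
      · simpa [(by omega : ¬ (0 = n + 1))] using hf0
      · intro m hm
        by_cases hmn : m = n
        · subst hmn
          simp only [if_neg (by omega : ¬ m = m + 1), if_pos rfl]
          have hfe : f m = e'.1 := by rw [hfn]; exact hs.2.2.1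
          rw [hfe]
          simpa using hs.2.1
        · have hmlt : m < n := by omega
          simp only [if_neg (by omega : ¬ m = n + 1), if_neg (by omega : ¬ m + 1 = n + 1),
            if_neg hmn]
          exact hed m hmlt
      · intro m m' hmm hm'
        by_cases hm'n : m' = n
        · subst hm'n
          simp only [if_pos rfl, if_neg (by omega : ¬ m = m')]
          have h2 : t m ≤ t (m' - 1) := by
            rcases eq_or_lt_of_le (by omega : m ≤ m' - 1) with h | h
            · rw [h]
            · exact le_of_lt (hmono _ _ h (by omega))
          calc t m ≤ t (m' - 1) := h2
            _ = e.2.2 := hlast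
            _ < e'.2.2 := hs.2.2.2
        · simp only [if_neg (by omega : ¬ m = n), if_neg hm'n]
          exact hmono m m' hmm (by omega)

lemma WalkStart.exists_walk {G : TemporalGraph V} {v : V} {e : V × V × ℕ}
    (h : WalkStart G e v) :
    ∃ (n : ℕ) (f : ℕ → V) (t : ℕ → ℕ), 1 ≤ n ∧ f 0 = e.1 ∧ f n = v ∧
      (∀ m, m < n → (f m, f (m + 1), t m) ∈ G.edges) ∧
      (∀ m m', m < m' → m' < n → t m < t m') ∧ t 0 = e.2.2 := by
  induction h with
  | single e he =>
      refine ⟨1, fun m => if m = 0 then e.1 else e.2.1, fun _ => e.2.2, le_refl 1,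
        by simp, by simp, ?_, by omega, rfl⟩
      intro m hm
      have hm0 : m = 0 := by omega
      subst hm0
      simpa using he
  | cons e e' v hs h ih =>
      obtain ⟨n, f, t, h1, hf0, hfn, hed, hmono, hfirst⟩ := ih
      refine ⟨n + 1, fun m => if m = 0 then e.1 else f (m - 1),
        fun m => if m = 0 then e.2.2 else t (m - 1), by omega, by simp, ?_, ?_, ?_, by simp⟩
      · simpa [(by omega : ¬ (n + 1 = 0))] using hfn
      · intro m hm
        by_cases hm0 : m = 0
        · subst hm0
          simp only [if_pos rfl, if_neg (by omega : ¬ (0 + 1 = 0))]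
          have hfe : f (0 + 1 - 1) = e.2.1 := by
            show f 0 = e.2.1
            rw [hf0, hs.2.2.1]
          rw [hfe]
          simpa using hs.1
        · simp only [if_neg hm0, if_neg (by omega : ¬ (m + 1 = 0))]
          have hme : m + 1 - 1 = (m - 1) + 1 := by omega
          rw [hme]
          exact hed (m - 1) (by omega)
      · intro m m' hmm hm'
        by_cases hm0 : m = 0
        · subst hm0
          simp only [if_pos rfl, if_neg (by omega : ¬ m' = 0)]
          have h2 : t 0 ≤ t (m' - 1) := by
            rcases Nat.eq_zero_or_pos (m' - 1) with h | h
            · rw [h]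
            · exact le_of_lt (hmono _ _ h (by omega))
          calc e.2.2 < e'.2.2 := hs.2.2.2
            _ = t 0 := hfirst.symm
            _ ≤ t (m' - 1) := h2
        · simp only [if_neg hm0, if_neg (by omega : ¬ m' = 0)]
          exact hmono (m - 1) (m' - 1) (by omega) (by omega)

lemma hasWalk_of_walkEnd {G : TemporalGraph V} {u : V} {e : V × V × ℕ}
    (h : WalkEnd G u e) : G.HasWalk u e.2.1 := by
  obtain ⟨n, f, t, h1, hf0, hfn, hed, hmono, -⟩ := h.exists_walk
  exact ⟨n, f, t, h1, hf0, hfn, hed, hmono, fun m _ => Set.mem_univ _⟩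

lemma hasWalk_of_walkStart {G : TemporalGraph V} {v : V} {e : V × V × ℕ}
    (h : WalkStart G e v) : G.HasWalk e.1 v := by
  obtain ⟨n, f, t, h1, hf0, hfn, hed, hmono, -⟩ := h.exists_walk
  exact ⟨n, f, t, h1, hf0, hfn, hed, hmono, fun m _ => Set.mem_univ _⟩

end TemporalVC

namespace TemporalVC

variable {V : Type*}

lemma pathChain {G : TemporalGraph V} {p : TPath V} (hp : p.IsPathIn G) :
    ∀ j' (j : ℕ), j ≤ j' → j' < p.len →
      EdgeLE G (p.f j, p.f (j + 1), p.t j) (p.f j', p.f (j' + 1), p.t j') := by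
  intro j'
  induction j' with
  | zero =>
      intro j hj _
      have : j = 0 := by omega
      subst this
      exact Relation.ReflTransGen.refl
  | succ j' ih =>
      intro j hj hlen
      rcases eq_or_lt_of_le hj with h | h
      · subst h
        exact Relation.ReflTransGen.refl
      · refine Relation.ReflTransGen.tail (ih j (by omega) (by omega)) ?_
        exact ⟨hp.2.1 j' (by omega), hp.2.1 (j' + 1) hlen, rfl,
          hp.2.2.1 j' (j' + 1) (by omega) hlen⟩

lemma edges_finite {G : TemporalGraph V} {k : ℕ} {P : Fin k → TPath V}
    (hGP : G.IsPathDecomp P) : G.edges.Finite := by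
  have hsub : G.edges ⊆ ⋃ i : Fin k, (P i).edgeSet := by
    intro e he
    obtain ⟨i, hi⟩ := (hGP.2 e he).exists
    exact Set.mem_iUnion.mpr ⟨i, hi⟩
  refine Set.Finite.subset (Set.finite_iUnion fun i => ?_) hsub
  have : (P i).edgeSet ⊆ (fun m => ((P i).f m, (P i).f (m + 1), (P i).t m)) '' (Set.Iio (P i).len) := by
    rintro e ⟨m, hm, rfl⟩
    exact ⟨m, hm, rfl⟩
  exact ((Set.finite_Iio _).image _).subset this

/-- Key step: if the latest in-edge of `s` and the latest in-edge of `r` both lie on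
path `i`, with `s` strictly below `r`, then no in-edge of `s` avoids flowing into an
in-edge of `r`. -/
lemma keyA {G : TemporalGraph V} {k : ℕ} {P : Fin k → TPath V} (hGP : G.IsPathDecomp P)
    {i : Fin k} {ms mr : ℕ} {s r : V}
    (hms : ms < (P i).len) (hmr : mr < (P i).len) (hlt : ms < mr)
    (hs : (P i).f (ms + 1) = s) (hr : (P i).f (mr + 1) = r)
    (hmax : ∀ g ∈ G.edges, g.2.1 = s → g.2.2 ≤ (P i).t ms)
    (hfr : ∃ g ∈ G.edges, g.2.1 = s ∧ ∀ h ∈ G.edges, h.2.1 = r → ¬ EdgeLE G g h) :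
    False := by
  have hi := hGP.1 i
  obtain ⟨g, hg, hgs, hgfree⟩ := hfr
  apply hgfree ((P i).f mr, (P i).f (mr + 1), (P i).t mr) (hi.2.1 mr hmr) hr
  have hstep : Step G g ((P i).f (ms + 1), (P i).f (ms + 1 + 1), (P i).t (ms + 1)) := by
    refine ⟨hg, hi.2.1 (ms + 1) (by omega), ?_, ?_⟩
    · rw [hgs]; exact hs.symm
    · exact lt_of_le_of_lt (hmax g hg hgs) (hi.2.2.1 ms (ms + 1) (by omega) (by omega))
  exact Relation.ReflTransGen.head hstep (pathChain hi mr (ms + 1) (by omega) hmr)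

/-- Dual key step for out-edges. -/
lemma keyA' {G : TemporalGraph V} {k : ℕ} {P : Fin k → TPath V} (hGP : G.IsPathDecomp P)
    {i : Fin k} {qs qr : ℕ} {s r : V}
    (hqs : qs < (P i).len) (hqr : qr < (P i).len) (hlt : qs < qr)
    (hfs : (P i).f qs = s) (hfr : (P i).f qr = r)
    (hminR : ∀ g ∈ G.edges, g.1 = r → (P i).t qr ≤ g.2.2)
    (hfr2 : ∃ f₀ ∈ G.edges, f₀.1 = r ∧ ∀ h ∈ G.edges, h.1 = s → ¬ EdgeLE G h f₀) :
    False := by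
  have hi := hGP.1 i
  obtain ⟨f₀, hf₀, hf₀r, hfree⟩ := hfr2
  apply hfree ((P i).f qs, (P i).f (qs + 1), (P i).t qs) (hi.2.1 qs hqs) hfs
  have hj : qr - 1 + 1 = qr := by omega
  have hchain := pathChain hi (qr - 1) qs (by omega) (by omega)
  refine Relation.ReflTransGen.tail hchain ?_
  refine ⟨hi.2.1 (qr - 1) (by omega), hf₀, ?_, ?_⟩
  · show (P i).f (qr - 1 + 1) = f₀.1
    rw [hj, hfr, hf₀r]
  · calc (P i).t (qr - 1) < (P i).t qr := hi.2.2.1 (qr - 1) qr (by omega) hqr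
      _ ≤ f₀.2.2 := hminR f₀ hf₀ hf₀r

end TemporalVC

namespace TemporalVC

variable {V : Type*}

/-- Main lemma (in-edge version): in a `k`-path temporal graph there is no set `T` of
`k+1` vertices such that for every ordered pair `(r, s)` of distinct elements of `T`
there is an in-edge of `s` from which no in-edge of `r` can be reached. -/
lemma lemmaA [Fintype V] {G : TemporalGraph V} {k : ℕ} (hk : 1 ≤ k)
    {P : Fin k → TPath V} (hGP : G.IsPathDecomp P)
    (T : Set V) (hTcard : T.ncard = k + 1)
    (hfree : ∀ r ∈ T, ∀ s ∈ T, r ≠ s →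
      ∃ g ∈ G.edges, g.2.1 = s ∧ ∀ h ∈ G.edges, h.2.1 = r → ¬ EdgeLE G g h) :
    False := by
  classical
  have hEfin : G.edges.Finite := edges_finite hGP
  have hT : T.Finite := Set.toFinite T
  have hsel : ∀ s : V, s ∈ T → ∃ (i : Fin k) (m : ℕ), m < (P i).len ∧
      (P i).f (m + 1) = s ∧ (∀ g ∈ G.edges, g.2.1 = s → g.2.2 ≤ (P i).t m) := by
    intro s hs
    have hfin : {e | e ∈ G.edges ∧ e.2.1 = s}.Finite :=
      hEfin.subset fun e he => he.1
    have hne : ∃ e, e ∈ G.edges ∧ e.2.1 = s := by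
      obtain ⟨r, hrT, hrs⟩ := Set.exists_ne_of_one_lt_ncard (s := T) (by omega) s
      obtain ⟨g, hg, hgs, -⟩ := hfree r hrT s hs hrs
      exact ⟨g, hg, hgs⟩
    have hne' : hfin.toFinset.Nonempty := by
      obtain ⟨e, he⟩ := hne
      exact ⟨e, hfin.mem_toFinset.mpr he⟩
    obtain ⟨e, heF, hemax⟩ := hfin.toFinset.exists_max_image (fun e => e.2.2) hne'
    have he : e ∈ G.edges ∧ e.2.1 = s := hfin.mem_toFinset.mp heF
    obtain ⟨i, hi⟩ := (hGP.2 e he.1).exists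
    obtain ⟨m, hm, hem⟩ := hi
    refine ⟨i, m, hm, ?_, ?_⟩
    · rw [← he.2, hem]
    · intro g hg hgs
      have h2 := hemax g (hfin.mem_toFinset.mpr ⟨hg, hgs⟩)
      calc g.2.2 ≤ e.2.2 := h2
        _ = (P i).t m := by rw [hem]
  choose ι μ hμlt hμf hμmax using hsel
  have hcards : (Finset.univ : Finset (Fin k)).card < hT.toFinset.card := by
    rw [Finset.card_univ, Fintype.card_fin, ← Set.ncard_eq_toFinset_card T hT, hTcard]
    omega
  obtain ⟨x, hxF, y, hyF, hxy, hχxy⟩ :=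
    Finset.exists_ne_map_eq_of_card_lt_of_maps_to
      (f := fun s => if hs : s ∈ T then ι s hs else ⟨0, hk⟩) hcards
      (fun s _ => Finset.mem_univ _)
  have hx : x ∈ T := hT.mem_toFinset.mp hxF
  have hy : y ∈ T := hT.mem_toFinset.mp hyF
  rw [dif_pos hx, dif_pos hy] at hχxy
  have hfy : (P (ι x hx)).f (μ y hy + 1) = y := by rw [hχxy]; exact hμf y hy
  have hlty : μ y hy < (P (ι x hx)).len := by rw [hχxy]; exact hμlt y hy
  have hmaxy : ∀ g ∈ G.edges, g.2.1 = y → g.2.2 ≤ (P (ι x hx)).t (μ y hy) := by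
    rw [hχxy]; exact hμmax y hy
  have hne : μ x hx ≠ μ y hy := by
    intro h
    apply hxy
    rw [← hμf x hx, ← hfy, h]
  rcases lt_or_gt_of_ne hne with h | h
  · exact keyA hGP (hμlt x hx) hlty h (hμf x hx) hfy (hμmax x hx)
      (hfree y hy x hx (Ne.symm hxy))
  · exact keyA hGP hlty (hμlt x hx) h hfy (hμf x hx) hmaxy
      (hfree x hx y hy hxy)

/-- Main lemma (out-edge version). -/
lemma lemmaA' [Fintype V] {G : TemporalGraph V} {k : ℕ} (hk : 1 ≤ k)
    {P : Fin k → TPath V} (hGP : G.IsPathDecomp P)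
    (T : Set V) (hTcard : T.ncard = k + 1)
    (hfree : ∀ r ∈ T, ∀ s ∈ T, r ≠ s →
      ∃ f₀ ∈ G.edges, f₀.1 = s ∧ ∀ h ∈ G.edges, h.1 = r → ¬ EdgeLE G h f₀) :
    False := by
  classical
  have hEfin : G.edges.Finite := edges_finite hGP
  have hT : T.Finite := Set.toFinite T
  have hsel : ∀ s : V, s ∈ T → ∃ (i : Fin k) (m : ℕ), m < (P i).len ∧
      (P i).f m = s ∧ (∀ g ∈ G.edges, g.1 = s → (P i).t m ≤ g.2.2) := by
    intro s hs
    have hfin : {e | e ∈ G.edges ∧ e.1 = s}.Finite :=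
      hEfin.subset fun e he => he.1
    have hne : ∃ e, e ∈ G.edges ∧ e.1 = s := by
      obtain ⟨r, hrT, hrs⟩ := Set.exists_ne_of_one_lt_ncard (s := T) (by omega) s
      obtain ⟨g, hg, hgs, -⟩ := hfree r hrT s hs hrs
      exact ⟨g, hg, hgs⟩
    have hne' : hfin.toFinset.Nonempty := by
      obtain ⟨e, he⟩ := hne
      exact ⟨e, hfin.mem_toFinset.mpr he⟩
    obtain ⟨e, heF, hemin⟩ := hfin.toFinset.exists_min_image (fun e => e.2.2) hne'
    have he : e ∈ G.edges ∧ e.1 = s := hfin.mem_toFinset.mp heF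
    obtain ⟨i, hi⟩ := (hGP.2 e he.1).exists
    obtain ⟨m, hm, hem⟩ := hi
    refine ⟨i, m, hm, ?_, ?_⟩
    · rw [← he.2, hem]
    · intro g hg hgs
      have h2 := hemin g (hfin.mem_toFinset.mpr ⟨hg, hgs⟩)
      calc (P i).t m = e.2.2 := by rw [hem]
        _ ≤ g.2.2 := h2
  choose ι μ hμlt hμf hμmin using hsel
  have hcards : (Finset.univ : Finset (Fin k)).card < hT.toFinset.card := by
    rw [Finset.card_univ, Fintype.card_fin, ← Set.ncard_eq_toFinset_card T hT, hTcard]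
    omega
  obtain ⟨x, hxF, y, hyF, hxy, hχxy⟩ :=
    Finset.exists_ne_map_eq_of_card_lt_of_maps_to
      (f := fun s => if hs : s ∈ T then ι s hs else ⟨0, hk⟩) hcards
      (fun s _ => Finset.mem_univ _)
  have hx : x ∈ T := hT.mem_toFinset.mp hxF
  have hy : y ∈ T := hT.mem_toFinset.mp hyF
  rw [dif_pos hx, dif_pos hy] at hχxy
  have hfy : (P (ι x hx)).f (μ y hy) = y := by rw [hχxy]; exact hμf y hy
  have hlty : μ y hy < (P (ι x hx)).len := by rw [hχxy]; exact hμlt y hy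
  have hminy : ∀ g ∈ G.edges, g.1 = y → (P (ι x hx)).t (μ y hy) ≤ g.2.2 := by
    rw [hχxy]; exact hμmin y hy
  have hne : μ x hx ≠ μ y hy := by
    intro h
    apply hxy
    rw [← hμf x hx, ← hfy, h]
  rcases lt_or_gt_of_ne hne with h | h
  · exact keyA' hGP (hμlt x hx) hlty h (hμf x hx) hfy hminy
      (hfree x hx y hy hxy)
  · exact keyA' hGP hlty (hμlt x hx) h hfy (hμf x hx) (hμmin x hx)
      (hfree y hy x hx (Ne.symm hxy))

end TemporalVC

open TemporalVC in
/-- The family of open temporal connected components of a directed `k`-path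
temporal graph has VC-dimension at most `2k + 1`: no set of `2k + 2` vertices is
shattered by it. -/
theorem openTCC_vc_dimension {V : Type*} [Fintype V] (k : ℕ) (hk : 1 ≤ k)
    (G : TemporalGraph V) (hG : G.IsKPathGraph k)
    (A : Set V) (hA : A ⊆ G.verts) (hcard : A.ncard = 2 * k + 2) :
    ¬ ∀ S ⊆ A, ∃ X : Set V, G.IsOpenTCC X ∧ X ∩ A = S := by
  classical
  intro hshat
  obtain ⟨P, hGP⟩ := hG
  -- all elements of `A` are pairwise compatible
  obtain ⟨XA, hXA, hXAA⟩ := hshat A (subset_refl A)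
  have hAX : A ⊆ XA := by
    intro a ha
    have : a ∈ XA ∩ A := hXAA.symm ▸ ha
    exact this.1
  have hAcomp : ∀ a ∈ A, ∀ b ∈ A, G.Compatible a b :=
    fun a ha b hb => hXA.2.1 a (hAX ha) b (hAX hb)
  -- every element of `A` has an incompatibility witness
  have hwit : ∀ a : V, ∃ w : V,
      a ∈ A → (¬ G.Compatible w a ∧ ∀ b ∈ A, b ≠ a → G.Compatible w b) := by
    intro a
    by_cases ha : a ∈ A
    · obtain ⟨X, hX, hXa⟩ := hshat (A \ {a}) Set.diff_subset
      have haX : a ∉ X := by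
        intro h
        have h2 : a ∈ X ∩ A := ⟨h, ha⟩
        rw [hXa] at h2
        exact h2.2 rfl
      have hsub : ∀ b ∈ A, b ≠ a → b ∈ X := by
        intro b hb hba
        have : b ∈ X ∩ A := hXa.symm ▸ (⟨hb, hba⟩ : b ∈ A \ {a})
        exact this.1
      have hXna : ¬ G.TemporallyConnected (X ∪ {a}) := by
        intro hTC
        have hXeq := hX.2.2 (X ∪ {a})
          (Set.union_subset hX.1 (by simpa using hA ha)) hTC Set.subset_union_left
        exact haX (hXeq ▸ Set.mem_union_right X rfl)
      rw [TemporalGraph.TemporallyConnected] at hXna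
      push_neg at hXna
      obtain ⟨u, hu, v, hv, huv⟩ := hXna
      rcases hu with hu | hu <;> rcases hv with hv | hv
      · exact absurd (hX.2.1 u hu v hv) huv
      · -- v = a
        have hva : v = a := hv
        subst hva
        refine ⟨u, fun _ => ⟨huv, ?_⟩⟩
        intro b hb hba
        exact hX.2.1 u hu b (hsub b hb hba)
      · -- u = a
        have hua : u = a := hu
        subst hua
        refine ⟨v, fun _ => ⟨fun h => huv ⟨h.2, h.1⟩, ?_⟩⟩
        intro b hb hba
        exact hX.2.1 v hv b (hsub b hb hba)
      · -- u = a, v = a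
        have hua : u = a := hu
        have hva : v = a := hv
        subst hua; subst hva
        exact absurd ⟨Or.inl rfl, Or.inl rfl⟩ huv
    · exact ⟨a, fun h => absurd h ha⟩
  choose w hw using hwit
  -- split according to the direction of incompatibility
  have hunion : A = {a ∈ A | ¬ G.Reaches (w a) a} ∪ {a ∈ A | G.Reaches (w a) a} := by
    ext z
    constructor
    · intro hz
      by_cases h : G.Reaches (w z) z
      · exact Or.inr ⟨hz, h⟩
      · exact Or.inl ⟨hz, h⟩
    · rintro (⟨h, -⟩ | ⟨h, -⟩) <;> exact h
  have hALR : 2 * k + 2 ≤ {a ∈ A | ¬ G.Reaches (w a) a}.ncard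
      + {a ∈ A | G.Reaches (w a) a}.ncard := by
    have h1 := Set.ncard_union_le {a ∈ A | ¬ G.Reaches (w a) a} {a ∈ A | G.Reaches (w a) a}
    rw [← hunion, hcard] at h1
    exact h1
  have hcase : k + 1 ≤ {a ∈ A | ¬ G.Reaches (w a) a}.ncard
      ∨ k + 1 ≤ {a ∈ A | G.Reaches (w a) a}.ncard := by
    by_contra h
    push_neg at h
    omega
  rcases hcase with hc | hc
  · -- the "w does not reach a" case: use in-edges
    obtain ⟨T, hTsub, hTcard⟩ := Set.exists_subset_card_eq hc
    refine lemmaA hk hGP T hTcard ?_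
    intro r hr s hs hrs
    have hrA : r ∈ A := (hTsub hr).1
    have hrL : ¬ G.Reaches (w r) r := (hTsub hr).2
    have hsA : s ∈ A := (hTsub hs).1
    have hcomp : G.Compatible (w r) s := (hw r hrA).2 s hsA (Ne.symm hrs)
    have hwr_ne : w r ≠ s := by
      rintro rfl
      exact (hw r hrA).1 (hAcomp (w r) hsA r hrA)
    have hwalk : G.HasWalk (w r) s := hcomp.1.resolve_left hwr_ne
    obtain ⟨g, hend, hgs⟩ := walkEnd_of_hasWalk hwalk
    refine ⟨g, hend.mem, hgs, ?_⟩
    intro h hh hhr hle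
    have h2 : WalkEnd G (w r) h := hend.le hle
    have h3 : G.HasWalk (w r) h.2.1 := hasWalk_of_walkEnd h2
    rw [hhr] at h3
    exact hrL (Or.inr h3)
  · -- the "a does not reach w" case: use out-edges
    obtain ⟨T, hTsub, hTcard⟩ := Set.exists_subset_card_eq hc
    refine lemmaA' hk hGP T hTcard ?_
    intro r hr s hs hrs
    have hrA : r ∈ A := (hTsub hr).1
    have hrR : G.Reaches (w r) r := (hTsub hr).2
    have hrL : ¬ G.Reaches r (w r) := by
      intro h
      exact (hw r hrA).1 ⟨hrR, h⟩
    have hsA : s ∈ A := (hTsub hs).1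
    have hcomp : G.Compatible (w r) s := (hw r hrA).2 s hsA (Ne.symm hrs)
    have hwr_ne : s ≠ w r := by
      rintro rfl
      exact (hw r hrA).1 (hAcomp _ hsA r hrA)
    have hwalk : G.HasWalk s (w r) := hcomp.2.resolve_left hwr_ne
    obtain ⟨f₀, hstart, hf₀s⟩ := walkStart_of_hasWalk hwalk
    refine ⟨f₀, hstart.mem, hf₀s, ?_⟩
    intro h hh hhr hle
    have h2 : WalkStart G h (w r) := WalkStart.le hle hstart
    have h3 : G.HasWalk h.1 (w r) := hasWalk_of_walkStart h2
    rw [hhr] at h3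
    exact hrL (Or.inr h3)
end

section
/- Let k ≥ 1 and let 𝒢 = (V, ℰ) be a directed k-path temporal graph with |V| = n. Then the number of distinct open temporal connected components of 𝒢 is at most ∑_{i=0}^{2k+1} (n choose i). -/
namespace TemporalGraph

variable {V : Type*} {G : TemporalGraph V}

/-- Walk with prescribed first and last edge. -/
def EWE (G : TemporalGraph V) (e g : V × V × ℕ) : Prop :=
  ∃ (n : ℕ) (f : ℕ → V) (t : ℕ → ℕ),
    1 ≤ n ∧
    (∀ m, m < n → (f m, f (m + 1), t m) ∈ G.edges) ∧
    (∀ m m', m < m' → m' < n → t m < t m') ∧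
    (f 0, f 1, t 0) = e ∧ (f (n - 1), f n, t (n - 1)) = g

/-- There is a walk starting with edge `e` and ending at vertex `v`. -/
def EW (G : TemporalGraph V) (e : V × V × ℕ) (v : V) : Prop :=
  ∃ g, G.EWE e g ∧ g.2.1 = v

/-- There is a walk starting at vertex `v` and ending with edge `e`. -/
def EW' (G : TemporalGraph V) (v : V) (e : V × V × ℕ) : Prop :=
  ∃ g, G.EWE g e ∧ g.1 = v

lemma EWE.mem_left {e g : V × V × ℕ} (h : G.EWE e g) : e ∈ G.edges := by
  obtain ⟨n, f, t, h1, he, -, hfirst, -⟩ := h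
  rw [← hfirst]; exact he 0 h1

lemma EWE.mem_right {e g : V × V × ℕ} (h : G.EWE e g) : g ∈ G.edges := by
  obtain ⟨n, f, t, h1, he, -, -, hlast⟩ := h
  rw [← hlast]
  have := he (n - 1) (by omega)
  rwa [show n - 1 + 1 = n by omega] at this

lemma hasWalk_iff {u v : V} :
    G.HasWalk u v ↔ ∃ e g, G.EWE e g ∧ e.1 = u ∧ g.2.1 = v := by
  constructor
  · rintro ⟨n, f, t, h1, h0, hn, he, ht, -⟩
    exact ⟨(f 0, f 1, t 0), (f (n - 1), f n, t (n - 1)),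
      ⟨n, f, t, h1, he, ht, rfl, rfl⟩, h0, hn⟩
  · rintro ⟨e, g, ⟨n, f, t, h1, he, ht, hfirst, hlast⟩, heu, hgv⟩
    refine ⟨n, f, t, h1, ?_, ?_, he, ht, fun _ _ => Set.mem_univ _⟩
    · rw [← heu, ← hfirst]
    · rw [← hgv, ← hlast]

/-- Splicing two walks that share an edge. -/
lemma EWE.trans {e f g : V × V × ℕ} (h1 : G.EWE e f) (h2 : G.EWE f g) : G.EWE e g := by
  obtain ⟨n1, F1, T1, hn1, he1, ht1, hf1, hl1⟩ := h1
  obtain ⟨n2, F2, T2, hn2, he2, ht2, hf2, hl2⟩ := h2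
  rcases eq_or_lt_of_le hn2 with hn2e | hn2x
  · have hfg : f = g := by rw [← hf2, ← hl2, ← hn2e]
    rw [← hfg]
    exact ⟨n1, F1, T1, hn1, he1, ht1, hf1, hl1⟩
  · have hmatch : (F1 (n1 - 1), F1 n1, T1 (n1 - 1)) = (F2 0, F2 1, T2 0) := by
      rw [hl1, hf2]
    have hF : F1 n1 = F2 1 := congrArg (fun p => p.2.1) hmatch
    have hT : T1 (n1 - 1) = T2 0 := congrArg (fun p => p.2.2) hmatch
    set F : ℕ → V := fun m => if m ≤ n1 then F1 m else F2 (m - n1 + 1) with hFdef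
    set T : ℕ → ℕ := fun m => if m < n1 then T1 m else T2 (m - n1 + 1) with hTdef
    have hFle : ∀ m, m ≤ n1 → F m = F1 m := fun m hm => if_pos hm
    have hFgt : ∀ m, n1 < m → F m = F2 (m - n1 + 1) := fun m hm => if_neg (by omega)
    have hFge : ∀ m, n1 ≤ m → F m = F2 (m - n1 + 1) := by
      intro m hm
      rcases eq_or_lt_of_le hm with hme | hml
      · rw [← hme, hFle n1 le_rfl, hF]
        congr 1
        omega
      · exact hFgt m hml
    have hTlt : ∀ m, m < n1 → T m = T1 m := fun m hm => if_pos hm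
    have hTge : ∀ m, n1 ≤ m → T m = T2 (m - n1 + 1) := fun m hm => if_neg (by omega)
    refine ⟨n1 + n2 - 1, F, T, by omega, ?_, ?_, ?_, ?_⟩
    · intro m hm
      by_cases h : m < n1
      · rw [hFle m (le_of_lt h), hFle (m+1) h, hTlt m h]
        exact he1 m h
      · have hmn : n1 ≤ m := le_of_not_gt h
        rw [hFge m hmn, hFgt (m+1) (by omega), hTge m hmn,
          show m + 1 - n1 + 1 = (m - n1 + 1) + 1 by omega]
        exact he2 (m - n1 + 1) (by omega)
    · intro m m' hmm hm'
      by_cases h' : m' < n1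
      · rw [hTlt m (lt_trans hmm h'), hTlt m' h']
        exact ht1 m m' hmm h'
      · have hm'n : n1 ≤ m' := le_of_not_gt h'
        rw [hTge m' hm'n]
        by_cases h : m < n1
        · rw [hTlt m h]
          have step1 : T1 m ≤ T1 (n1 - 1) := by
            rcases eq_or_lt_of_le (show m ≤ n1 - 1 by omega) with h0 | h0
            · rw [h0]
            · exact le_of_lt (ht1 m (n1 - 1) h0 (by omega))
          calc T1 m ≤ T2 0 := by rw [← hT]; exact step1
            _ < T2 (m' - n1 + 1) := ht2 0 (m' - n1 + 1) (by omega) (by omega)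
        · rw [hTge m (le_of_not_gt h)]
          exact ht2 (m - n1 + 1) (m' - n1 + 1) (by omega) (by omega)
    · rw [hFle 0 (by omega), hFle 1 hn1, hTlt 0 hn1]
      exact hf1
    · rw [hFge (n1 + n2 - 1) (by omega), hFge (n1 + n2 - 1 - 1) (by omega),
        hTge (n1 + n2 - 1 - 1) (by omega),
        show n1 + n2 - 1 - n1 + 1 = n2 by omega,
        show n1 + n2 - 1 - 1 - n1 + 1 = n2 - 1 by omega]
      exact hl2

/-- First-edge swap. -/
lemma EW.first_swap {e e' : V × V × ℕ} {v : V} (h : G.EW e' v) (he : e ∈ G.edges)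
    (hhead : e.2.1 = e'.2.1) (htime : e.2.2 ≤ e'.2.2) : G.EW e v := by
  obtain ⟨g, ⟨n, f, t, hn, hedge, hmono, hfirst, hlast⟩, hgv⟩ := h
  have hf1 : f 1 = e.2.1 := by rw [hhead, ← hfirst]
  have ht0 : t 0 = e'.2.2 := by rw [← hfirst]
  set F : ℕ → V := fun m => if m = 0 then e.1 else f m with hFdef
  set T : ℕ → ℕ := fun m => if m = 0 then e.2.2 else t m with hTdef
  have hF0 : F 0 = e.1 := if_pos rfl
  have hFpos : ∀ m, m ≠ 0 → F m = f m := fun m hm => if_neg hm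
  have hT0 : T 0 = e.2.2 := if_pos rfl
  have hTpos : ∀ m, m ≠ 0 → T m = t m := fun m hm => if_neg hm
  have hfn : f n = v := by rw [← hgv, ← hlast]
  refine ⟨(F (n - 1), F n, T (n - 1)), ⟨n, F, T, hn, ?_, ?_, ?_, rfl⟩, ?_⟩
  · intro m hm
    rcases Nat.eq_zero_or_pos m with rfl | hmpos
    · rw [hF0, hFpos 1 one_ne_zero, hT0, hf1]
      simpa using he
    · rw [hFpos m (by omega), hFpos (m+1) (by omega), hTpos m (by omega)]
      exact hedge m hm
  · intro m m' hmm hm'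
    rw [hTpos m' (by omega)]
    rcases Nat.eq_zero_or_pos m with rfl | hmpos
    · rw [hT0]
      calc e.2.2 ≤ e'.2.2 := htime
        _ = t 0 := ht0.symm
        _ < t m' := hmono 0 m' (by omega) hm'
    · rw [hTpos m (by omega)]
      exact hmono m m' hmm hm'
  · rw [hF0, hFpos 1 one_ne_zero, hT0, hf1]
  · show F n = v
    rw [hFpos n (by omega)]
    exact hfn

/-- Last-edge swap. -/
lemma EW'.last_swap {e e' : V × V × ℕ} {v : V} (h : G.EW' v e') (he : e ∈ G.edges)
    (htail : e.1 = e'.1) (htime : e'.2.2 ≤ e.2.2) : G.EW' v e := by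
  obtain ⟨g, ⟨n, f, t, hn, hedge, hmono, hfirst, hlast⟩, hgv⟩ := h
  have hfn1 : f (n - 1) = e.1 := by rw [htail, ← hlast]
  have htn1 : t (n - 1) = e'.2.2 := by rw [← hlast]
  set F : ℕ → V := fun m => if m = n then e.2.1 else f m with hFdef
  set T : ℕ → ℕ := fun m => if m = n - 1 then e.2.2 else t m with hTdef
  have hFn : F n = e.2.1 := if_pos rfl
  have hFne : ∀ m, m ≠ n → F m = f m := fun m hm => if_neg hm
  have hTn1 : T (n - 1) = e.2.2 := if_pos rfl
  have hTne : ∀ m, m ≠ n - 1 → T m = t m := fun m hm => if_neg hm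
  have hf0 : f 0 = v := by rw [← hgv, ← hfirst]
  refine ⟨(F 0, F 1, T 0), ⟨n, F, T, hn, ?_, ?_, rfl, ?_⟩, ?_⟩
  · intro m hm
    rcases eq_or_lt_of_le (show m ≤ n - 1 by omega) with hme | hml
    · have c1 : F m = e.1 := by rw [hFne m (by omega), hme, hfn1]
      have c2 : F (m + 1) = e.2.1 := by rw [show m + 1 = n by omega]; exact hFn
      have c3 : T m = e.2.2 := by rw [hme]; exact hTn1
      rw [c1, c2, c3]
      simpa using he
    · rw [hFne m (by omega), hFne (m+1) (by omega), hTne m (by omega)]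
      exact hedge m hm
  · intro m m' hmm hm'
    rw [hTne m (by omega)]
    rcases eq_or_lt_of_le (show m' ≤ n - 1 by omega) with hme | hml
    · rw [← hme, hme] at htn1
      rw [← hme] at hTn1
      rw [hTn1]
      calc t m < t m' := hmono m m' hmm hm'
        _ = e'.2.2 := by rw [← htn1, hme]
        _ ≤ e.2.2 := htime
    · rw [hTne m' (by omega)]
      exact hmono m m' hmm hm'
  · have c1 : F (n - 1) = e.1 := by rw [hFne (n-1) (by omega), hfn1]
    rw [c1, hFn, hTn1]
  · show F 0 = v
    rcases eq_or_lt_of_le hn with h1 | h2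
    · rw [hFne 0 (by omega)]
      exact hf0
    · rw [hFne 0 (by omega)]
      exact hf0

end TemporalGraph


namespace TemporalGraph

variable {V : Type*} {G : TemporalGraph V} {k : ℕ} {P : Fin k → TPath V}

lemma ewe_segment {p : TPath V} (hp : p.IsPathIn G) {a b : ℕ} (hab : a ≤ b)
    (hb : b < p.len) :
    G.EWE (p.f a, p.f (a + 1), p.t a) (p.f b, p.f (b + 1), p.t b) := by
  refine ⟨b - a + 1, fun m => p.f (a + m), fun m => p.t (a + m), by omega, ?_, ?_, ?_, ?_⟩
  · intro m hm
    exact hp.2.1 (a + m) (by omega)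
  · intro m m' hmm hm'
    exact hp.2.2.1 (a + m) (a + m') (by omega) (by omega)
  · rfl
  · show (p.f (a + (b - a + 1 - 1)), p.f (a + (b - a + 1)), p.t (a + (b - a + 1 - 1)))
      = (p.f b, p.f (b + 1), p.t b)
    rw [show b - a + 1 - 1 = b - a by omega, show a + (b - a) = b by omega,
      show a + (b - a + 1) = b + 1 by omega]

lemma edges_finite (hG : G.IsPathDecomp P) : G.edges.Finite := by
  have hsub : G.edges ⊆ ⋃ i : Fin k, (P i).edgeSet := by
    intro e he
    obtain ⟨i, hi, -⟩ := hG.2 e he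
    exact Set.mem_iUnion.2 ⟨i, hi⟩
  refine Set.Finite.subset (Set.finite_iUnion fun i => ?_) hsub
  have himg : (P i).edgeSet
      = (fun m => ((P i).f m, (P i).f (m + 1), (P i).t m)) '' (Set.Iio (P i).len) := by
    ext e
    simp only [TPath.edgeSet, Set.mem_setOf_eq, Set.mem_image, Set.mem_Iio]
    constructor
    · rintro ⟨m, hm, rfl⟩; exact ⟨m, hm, rfl⟩
    · rintro ⟨m, hm, rfl⟩; exact ⟨m, hm, rfl⟩
  rw [himg]
  exact (Set.finite_Iio _).image _

lemma lemmaA (hG : G.IsPathDecomp P) (T : Finset V)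
    (hTcard : T.card = k + 1) (hk : 1 ≤ k)
    (hcompat : ∀ a ∈ T, ∀ b ∈ T, G.Compatible a b) :
    ∃ i ∈ T, ∃ j ∈ T, i ≠ j ∧ ∀ e, G.EW e j → G.EW e i := by
  classical
  have hfin := edges_finite hG
  have hIN : ∀ j, j ∈ T → ∃ e, e ∈ G.edges ∧ e.2.1 = j ∧
      ∀ e', e' ∈ G.edges → e'.2.1 = j → e'.2.2 ≤ e.2.2 := by
    intro j hj
    obtain ⟨j', hj', hne⟩ := Finset.exists_mem_ne (by rw [hTcard]; omega) j
    have hr : G.Reaches j' j := (hcompat j' hj' j hj).1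
    rcases hr with rfl | hw
    · exact absurd rfl hne
    · obtain ⟨e, g, hewe, -, hghead⟩ := hasWalk_iff.1 hw
      have hS : {e | e ∈ G.edges ∧ e.2.1 = j}.Finite :=
        hfin.subset (fun x hx => hx.1)
      obtain ⟨b, hb, hbmax⟩ := Set.exists_max_image _ (fun e => e.2.2) hS
        ⟨g, hewe.mem_right, hghead⟩
      exact ⟨b, hb.1, hb.2, fun e' h1 h2 => hbmax e' ⟨h1, h2⟩⟩
  choose β hβmem hβhead hβmax using hIN
  by_cases hcase : ∃ j, ∃ hj : j ∈ T, ∃ i, i ∈ T ∧ i ≠ j ∧ G.EW (β j hj) i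
  · obtain ⟨j, hj, i, hi, hne, hEW⟩ := hcase
    refine ⟨i, hi, j, hj, hne, ?_⟩
    rintro e ⟨g, hewe, hghead⟩
    have hg : g ∈ G.edges := hewe.mem_right
    have h1 : G.EW g i := by
      refine EW.first_swap hEW hg ?_ ?_
      · rw [hghead, hβhead j hj]
      · exact hβmax j hj g hg hghead
    obtain ⟨g2, hewe2, hg2⟩ := h1
    exact ⟨g2, hewe.trans hewe2, hg2⟩
  · exfalso
    push_neg at hcase
    set φ : {x // x ∈ T} → Fin k := fun x =>
      (hG.2 (β x.1 x.2) (hβmem x.1 x.2)).exists.choose with hφdef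
    have hφ : ∀ x : {x // x ∈ T}, β x.1 x.2 ∈ (P (φ x)).edgeSet := fun x =>
      (hG.2 (β x.1 x.2) (hβmem x.1 x.2)).exists.choose_spec
    have hpig : ∃ x ∈ T.attach, ∃ y ∈ T.attach, x ≠ y ∧ φ x = φ y := by
      apply Finset.exists_ne_map_eq_of_card_lt_of_maps_to
      · rw [Finset.card_attach, hTcard, Finset.card_univ, Fintype.card_fin]
        omega
      · intro a _
        exact Finset.mem_univ _
    obtain ⟨x, -, y, -, hxy, hφeq⟩ := hpig
    set c := φ x with hc
    obtain ⟨p, hp, hpe⟩ := hφ x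
    obtain ⟨q, hq, hqe⟩ := by
      have := hφ y
      rw [← hφeq] at this
      exact this
    have hxyv : x.1 ≠ y.1 := fun h => hxy (Subtype.ext h)
    have hheadx : (P c).f (p + 1) = x.1 := by
      have := hβhead x.1 x.2
      rw [hpe] at this
      exact this
    have hheady : (P c).f (q + 1) = y.1 := by
      have := hβhead y.1 y.2
      rw [hqe] at this
      exact this
    have hpq : p ≠ q := by
      intro h
      apply hxyv
      rw [← hheadx, ← hheady, h]
    have key : ∀ (a b : {x // x ∈ T}) (pa pb : ℕ), pa < pb → pb < (P c).len →
        β a.1 a.2 = ((P c).f pa, (P c).f (pa + 1), (P c).t pa) →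
        β b.1 b.2 = ((P c).f pb, (P c).f (pb + 1), (P c).t pb) →
        (P c).f (pb + 1) = b.1 → b.1 ≠ a.1 → False := by
      intro a b pa pb hab hbl hea heb hhb hne
      have hseg := ewe_segment (G := G) (hG.1 c) (le_of_lt hab) hbl
      rw [← hea, ← heb] at hseg
      exact hcase a.1 a.2 b.1 b.2 hne ⟨β b.1 b.2, hseg, by rw [heb]; exact hhb⟩
    rcases lt_or_gt_of_ne hpq with h | h
    · exact key x y p q h hq hpe hqe hheady hxyv.symm
    · exact key y x q p h hp hqe hpe hheadx hxyv

end TemporalGraph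



namespace TemporalGraph

variable {V : Type*} {G : TemporalGraph V} {k : ℕ} {P : Fin k → TPath V}

lemma lemmaA' (hG : G.IsPathDecomp P) (T : Finset V)
    (hTcard : T.card = k + 1) (hk : 1 ≤ k)
    (hcompat : ∀ a ∈ T, ∀ b ∈ T, G.Compatible a b) :
    ∃ i ∈ T, ∃ j ∈ T, i ≠ j ∧ ∀ e, G.EW' j e → G.EW' i e := by
  classical
  have hfin := edges_finite hG
  have hOUT : ∀ j, j ∈ T → ∃ e, e ∈ G.edges ∧ e.1 = j ∧
      ∀ e', e' ∈ G.edges → e'.1 = j → e.2.2 ≤ e'.2.2 := by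
    intro j hj
    obtain ⟨j', hj', hne⟩ := Finset.exists_mem_ne (by rw [hTcard]; omega) j
    have hr : G.Reaches j j' := (hcompat j' hj' j hj).2
    rcases hr with heq | hw
    · exact absurd heq.symm hne
    · obtain ⟨e, g, hewe, hetail, -⟩ := hasWalk_iff.1 hw
      have hS : {e | e ∈ G.edges ∧ e.1 = j}.Finite :=
        hfin.subset (fun x hx => hx.1)
      obtain ⟨b, hb, hbmin⟩ := Set.exists_min_image _ (fun e => e.2.2) hS
        ⟨e, hewe.mem_left, hetail⟩
      exact ⟨b, hb.1, hb.2, fun e' h1 h2 => hbmin e' ⟨h1, h2⟩⟩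
  choose δ hδmem hδtail hδmin using hOUT
  by_cases hcase : ∃ j, ∃ hj : j ∈ T, ∃ i, i ∈ T ∧ i ≠ j ∧ G.EW' i (δ j hj)
  · obtain ⟨j, hj, i, hi, hne, hEW⟩ := hcase
    refine ⟨i, hi, j, hj, hne, ?_⟩
    rintro e ⟨g, hewe, hgtail⟩
    have hg : g ∈ G.edges := hewe.mem_left
    have h1 : G.EW' i g := by
      refine EW'.last_swap hEW hg ?_ ?_
      · rw [hgtail, hδtail j hj]
      · exact hδmin j hj g hg hgtail
    obtain ⟨g2, hewe2, hg2⟩ := h1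
    exact ⟨g2, hewe2.trans hewe, hg2⟩
  · exfalso
    push_neg at hcase
    set φ : {x // x ∈ T} → Fin k := fun x =>
      (hG.2 (δ x.1 x.2) (hδmem x.1 x.2)).exists.choose with hφdef
    have hφ : ∀ x : {x // x ∈ T}, δ x.1 x.2 ∈ (P (φ x)).edgeSet := fun x =>
      (hG.2 (δ x.1 x.2) (hδmem x.1 x.2)).exists.choose_spec
    have hpig : ∃ x ∈ T.attach, ∃ y ∈ T.attach, x ≠ y ∧ φ x = φ y := by
      apply Finset.exists_ne_map_eq_of_card_lt_of_maps_to
      · rw [Finset.card_attach, hTcard, Finset.card_univ, Fintype.card_fin]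
        omega
      · intro a _
        exact Finset.mem_univ _
    obtain ⟨x, -, y, -, hxy, hφeq⟩ := hpig
    set c := φ x with hc
    obtain ⟨p, hp, hpe⟩ := hφ x
    obtain ⟨q, hq, hqe⟩ := by
      have := hφ y
      rw [← hφeq] at this
      exact this
    have hxyv : x.1 ≠ y.1 := fun h => hxy (Subtype.ext h)
    have htailx : (P c).f p = x.1 := by
      have := hδtail x.1 x.2
      rw [hpe] at this
      exact this
    have htaily : (P c).f q = y.1 := by
      have := hδtail y.1 y.2
      rw [hqe] at this
      exact this
    have hpq : p ≠ q := by
      intro h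
      apply hxyv
      rw [← htailx, ← htaily, h]
    have key : ∀ (a b : {x // x ∈ T}) (pa pb : ℕ), pa < pb → pb < (P c).len →
        δ a.1 a.2 = ((P c).f pa, (P c).f (pa + 1), (P c).t pa) →
        δ b.1 b.2 = ((P c).f pb, (P c).f (pb + 1), (P c).t pb) →
        (P c).f pa = a.1 → a.1 ≠ b.1 → False := by
      intro a b pa pb hab hbl hea heb hta hne
      have hseg := ewe_segment (G := G) (hG.1 c) (le_of_lt hab) hbl
      rw [← hea, ← heb] at hseg
      exact hcase b.1 b.2 a.1 a.2 hne ⟨δ a.1 a.2, hseg, by rw [hea]; exact hta⟩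
    rcases lt_or_gt_of_ne hpq with h | h
    · exact key x y p q h hq hpe hqe htailx hxyv
    · exact key y x q p h hp hqe hpe htaily hxyv.symm

end TemporalGraph



namespace TemporalGraph

variable {V : Type*} {G : TemporalGraph V} {k : ℕ} {P : Fin k → TPath V}

lemma core [DecidableEq V] (hG : G.IsPathDecomp P) (hk : 1 ≤ k) (s : Finset V)
    (hcard : s.card = 2 * k + 1)
    (hsh : ∀ t ⊆ s, ∃ u : Finset V, G.IsOpenTCC (↑u : Set V) ∧ s ∩ u = t) : False := by
  classical
  obtain ⟨u0, hu0tcc, hu0⟩ := hsh s Finset.Subset.rfl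
  have hssub : s ⊆ u0 := by rw [← Finset.inter_eq_left]; exact hu0
  have hcompat : ∀ a ∈ s, ∀ b ∈ s, G.Compatible a b := fun a ha b hb =>
    hu0tcc.2.1 a (hssub ha) b (hssub hb)
  have hwit : ∀ a : V, ∃ y : V, a ∈ s →
      (¬ G.Compatible y a ∧ ∀ b ∈ s, b ≠ a → G.Compatible y b) := by
    intro a
    by_cases ha : a ∈ s
    · obtain ⟨u, hutcc, hu⟩ := hsh (s.erase a) (Finset.erase_subset _ _)
      have hanotu : a ∉ u := by
        intro hau
        have hmem : a ∈ s ∩ u := Finset.mem_inter.2 ⟨ha, hau⟩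
        rw [hu] at hmem
        exact (Finset.notMem_erase a s) hmem
      have herasesub : s.erase a ⊆ u := by
        rw [← hu]; exact Finset.inter_subset_right
      have hexy : ∃ y ∈ u, ¬ G.Compatible y a := by
        by_contra hno
        push_neg at hno
        have hY : G.TemporallyConnected ((↑u : Set V) ∪ {a}) := by
          rintro x (hx | hx) z (hz | hz)
          · exact hutcc.2.1 x hx z hz
          · rw [Set.mem_singleton_iff] at hz; subst hz
            exact hno x hx
          · rw [Set.mem_singleton_iff] at hx; subst hx
            exact ⟨(hno z hz).2, (hno z hz).1⟩
          · rw [Set.mem_singleton_iff] at hx hz; subst hx; subst hz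
            exact ⟨Or.inl rfl, Or.inl rfl⟩
        have hYsub : ((↑u : Set V) ∪ {a}) ⊆ G.verts := by
          rintro x (hx | hx)
          · exact hutcc.1 hx
          · rw [Set.mem_singleton_iff] at hx; subst hx
            exact hu0tcc.1 (Finset.mem_coe.2 (hssub ha))
        have heq := hutcc.2.2 ((↑u : Set V) ∪ {a}) hYsub hY Set.subset_union_left
        have hain : a ∈ (↑u : Set V) := by rw [heq]; exact Or.inr rfl
        exact hanotu (Finset.mem_coe.1 hain)
      obtain ⟨yy, hyy, hync⟩ := hexy
      refine ⟨yy, fun _ => ⟨hync, ?_⟩⟩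
      intro b hb hba
      have hbu : b ∈ u := herasesub (Finset.mem_erase.2 ⟨hba, hb⟩)
      exact hutcc.2.1 yy hyy b hbu
    · exact ⟨a, fun h => absurd h ha⟩
  choose y hy using hwit
  set Fs := s.filter (fun a => ¬ G.Reaches (y a) a) with hFs
  set Bs := s.filter (fun a => G.Reaches (y a) a) with hBs
  have hsplit : Bs.card + Fs.card = 2 * k + 1 := by
    rw [hBs, hFs, ← hcard]
    exact Finset.card_filter_add_card_filter_not _
  have hFB : k + 1 ≤ Fs.card ∨ k + 1 ≤ Bs.card := by omega
  rcases hFB with hbig | hbig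
  · obtain ⟨T, hTsub, hTcard⟩ := Finset.exists_subset_card_eq hbig
    have hTs : ∀ a ∈ T, a ∈ s := fun a haT =>
      (Finset.mem_filter.1 (hTsub haT)).1
    obtain ⟨i, hi, j, hj, hne, himp⟩ := lemmaA hG T hTcard hk
      (fun a ha b hb => hcompat a (hTs a ha) b (hTs b hb))
    have his : i ∈ s := hTs i hi
    have hjs : j ∈ s := hTs j hj
    have hiF : ¬ G.Reaches (y i) i := (Finset.mem_filter.1 (hTsub hi)).2
    have hyi := hy i his
    have hyij : y i ≠ j := by
      intro h
      exact hyi.1 (h ▸ hcompat j hjs i his)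
    have hreach : G.Reaches (y i) j := (hyi.2 j hjs hne.symm).1
    rcases hreach with heq | hw
    · exact hyij heq
    · obtain ⟨e, g, hewe, hetail, hghead⟩ := hasWalk_iff.1 hw
      have hEWj : G.EW e j := ⟨g, hewe, hghead⟩
      obtain ⟨g2, hewe2, hg2⟩ := himp e hEWj
      exact hiF (Or.inr (hasWalk_iff.2 ⟨e, g2, hewe2, hetail, hg2⟩))
  · obtain ⟨T, hTsub, hTcard⟩ := Finset.exists_subset_card_eq hbig
    have hTs : ∀ a ∈ T, a ∈ s := fun a haT =>
      (Finset.mem_filter.1 (hTsub haT)).1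
    obtain ⟨i, hi, j, hj, hne, himp⟩ := lemmaA' hG T hTcard hk
      (fun a ha b hb => hcompat a (hTs a ha) b (hTs b hb))
    have his : i ∈ s := hTs i hi
    have hjs : j ∈ s := hTs j hj
    have hiB : G.Reaches (y i) i := (Finset.mem_filter.1 (hTsub hi)).2
    have hyi := hy i his
    have hiBnot : ¬ G.Reaches i (y i) := by
      intro h
      exact hyi.1 ⟨hiB, h⟩
    have hyij : y i ≠ j := by
      intro h
      exact hyi.1 (h ▸ hcompat j hjs i his)
    have hreach : G.Reaches j (y i) := (hyi.2 j hjs hne.symm).2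
    rcases hreach with heq | hw
    · exact hyij heq.symm
    · obtain ⟨e, g, hewe, hetail, hghead⟩ := hasWalk_iff.1 hw
      have hEWj : G.EW' j g := ⟨e, hewe, hetail⟩
      obtain ⟨e2, hewe2, he2⟩ := himp g hEWj
      exact hiBnot (Or.inr (hasWalk_iff.2 ⟨e2, g, hewe2, he2, hghead⟩))

end TemporalGraph


/-- A directed `k`-path temporal graph on `n` vertices has at most
`∑_{i=0}^{2k+1} (n choose i)` distinct open temporal connected components. -/
theorem openTCC_count_le {V : Type*} [Fintype V] (k : ℕ) (hk : 1 ≤ k)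
    (G : TemporalGraph V) (hG : G.IsKPathGraph k)
    (n : ℕ) (hn : G.verts.ncard = n) :
    {X : Set V | G.IsOpenTCC X}.ncard ≤ ∑ i ∈ Finset.range (2 * k + 2), n.choose i := by
  classical
  obtain ⟨P, hP⟩ := hG
  set 𝒜 : Finset (Finset V) := Finset.univ.filter (fun F => G.IsOpenTCC (↑F : Set V)) with h𝒜
  have hncard : {X : Set V | G.IsOpenTCC X}.ncard = 𝒜.card := by
    have himg : {X : Set V | G.IsOpenTCC X} = (fun F : Finset V => (↑F : Set V)) '' ↑𝒜 := by
      ext X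
      simp only [Set.mem_setOf_eq, Set.mem_image, Finset.mem_coe, h𝒜, Finset.mem_filter,
        Finset.mem_univ, true_and]
      constructor
      · intro hX
        exact ⟨(Set.toFinite X).toFinset, by rwa [Set.Finite.coe_toFinset],
          Set.Finite.coe_toFinset _⟩
      · rintro ⟨F, hF, rfl⟩
        exact hF
    rw [himg, Set.ncard_image_of_injective _ Finset.coe_injective, Set.ncard_coe_finset]
  rw [hncard]
  set W : Finset V := (Set.toFinite G.verts).toFinset with hW
  have hWcard : W.card = n := by
    rw [hW, ← hn, Set.ncard_eq_toFinset_card G.verts (Set.toFinite _)]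
  have hsub : 𝒜.shatterer ⊆ (Finset.range (2 * k + 1)).biUnion (fun i => W.powersetCard i) := by
    intro u hu
    have hush : 𝒜.Shatters u := Finset.mem_shatterer.1 hu
    have huW : u ⊆ W := by
      obtain ⟨F, hF, hFsub⟩ := hush.exists_superset
      have hFtcc : G.IsOpenTCC (↑F : Set V) := (Finset.mem_filter.1 hF).2
      intro x hx
      have : x ∈ (↑F : Set V) := Finset.mem_coe.2 (hFsub hx)
      exact (Set.toFinite G.verts).mem_toFinset.2 (hFtcc.1 this)
    have hucard : u.card ≤ 2 * k := by
      by_contra hbig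
      push_neg at hbig
      obtain ⟨t, hts, htcard⟩ := Finset.exists_subset_card_eq (show 2 * k + 1 ≤ u.card by omega)
      have htsh : 𝒜.Shatters t := hush.mono_right hts
      refine TemporalGraph.core hP hk t htcard ?_
      intro t' ht'
      obtain ⟨F, hF, hFt⟩ := htsh ht'
      exact ⟨F, (Finset.mem_filter.1 hF).2, hFt⟩
    refine Finset.mem_biUnion.2 ⟨u.card, Finset.mem_range.2 (by omega), ?_⟩
    exact Finset.mem_powersetCard.2 ⟨huW, rfl⟩
  calc 𝒜.card ≤ 𝒜.shatterer.card := Finset.card_le_card_shatterer 𝒜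
    _ ≤ ((Finset.range (2 * k + 1)).biUnion (fun i => W.powersetCard i)).card :=
        Finset.card_le_card hsub
    _ ≤ ∑ i ∈ Finset.range (2 * k + 1), (W.powersetCard i).card := Finset.card_biUnion_le
    _ = ∑ i ∈ Finset.range (2 * k + 1), n.choose i := by
        refine Finset.sum_congr rfl fun i _ => ?_
        rw [Finset.card_powersetCard, hWcard]
    _ ≤ ∑ i ∈ Finset.range (2 * k + 2), n.choose i :=
        Finset.sum_le_sum_of_subset (Finset.range_subset_range.2 (by omega))
end

section
/- Let k ≥ 1 and let 𝒢 = (V, ℰ) be a directed k-path temporal graph. Then there do not exist 2k + 2 pairwise distinct vertices a₁, …, a_{k+1}, b₁, …, b_{k+1} ∈ V such that simultaneously: (1) aᵢ and a_j are compatible for all i ≠ j; (2) bᵢ and a_j are compatible for all i ≠ j; and (3) for every i, bᵢ does not reach aᵢ. -/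
namespace TemporalGraph

variable {V : Type*} {G : TemporalGraph V}

/-- A strict temporal walk with prescribed first and last edge labels. -/
def WalkTimed (G : TemporalGraph V) (u v : V) (σ τ : ℕ) : Prop :=
  ∃ (n : ℕ) (f : ℕ → V) (t : ℕ → ℕ),
    1 ≤ n ∧ f 0 = u ∧ f n = v ∧
    (∀ m, m < n → (f m, f (m + 1), t m) ∈ G.edges) ∧
    (∀ m m', m < m' → m' < n → t m < t m') ∧
    t 0 = σ ∧ t (n - 1) = τ

lemma WalkTimed.hasWalk {u v : V} {σ τ : ℕ} (h : G.WalkTimed u v σ τ) :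
    G.HasWalk u v := by
  obtain ⟨n, f, t, hn, h0, h1, he, hm, -, -⟩ := h
  exact ⟨n, f, t, hn, h0, h1, he, hm, fun m _ => Set.mem_univ _⟩

lemma HasWalk.walkTimed {u v : V} (h : G.HasWalk u v) :
    ∃ σ τ, G.WalkTimed u v σ τ := by
  obtain ⟨n, f, t, hn, h0, h1, he, hm, -⟩ := h
  exact ⟨t 0, t (n - 1), n, f, t, hn, h0, h1, he, hm, rfl, rfl⟩

lemma WalkTimed.trans {u v w : V} {σ τ σ' τ' : ℕ} (h1 : G.WalkTimed u v σ τ)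
    (h2 : G.WalkTimed v w σ' τ') (hlt : τ < σ') : G.WalkTimed u w σ τ' := by
  obtain ⟨n, f, t, hn, hf0, hfn, he, hm, ht0, htl⟩ := h1
  obtain ⟨n', f', t', hn', hf0', hfn', he', hm', ht0', htl'⟩ := h2
  refine ⟨n + n', fun m => if m < n then f m else f' (m - n),
      fun m => if m < n then t m else t' (m - n), by omega, ?_, ?_, ?_, ?_, ?_, ?_⟩
  · show (if 0 < n then f 0 else f' (0 - n)) = u
    rw [if_pos (by omega : 0 < n)]; exact hf0
  · show (if n + n' < n then f (n + n') else f' (n + n' - n)) = w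
    rw [if_neg (by omega : ¬ n + n' < n), show n + n' - n = n' from by omega]
    exact hfn'
  · intro m hm2
    by_cases hc2 : m < n
    · by_cases hc : m + 1 < n
      · show (if m < n then f m else f' (m - n), (if m + 1 < n then f (m + 1) else f' (m + 1 - n)),
            (if m < n then t m else t' (m - n))) ∈ G.edges
        rw [if_pos hc2, if_pos hc, if_pos hc2]
        exact he m hc2
      · show (if m < n then f m else f' (m - n), (if m + 1 < n then f (m + 1) else f' (m + 1 - n)),
            (if m < n then t m else t' (m - n))) ∈ G.edges
        rw [if_pos hc2, if_neg hc, if_pos hc2, show m + 1 - n = 0 from by omega, hf0', ← hfn,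
          show n = m + 1 from by omega]
        exact he m hc2
    · show (if m < n then f m else f' (m - n), (if m + 1 < n then f (m + 1) else f' (m + 1 - n)),
          (if m < n then t m else t' (m - n))) ∈ G.edges
      rw [if_neg hc2, if_neg (by omega : ¬ m + 1 < n), if_neg hc2,
        show m + 1 - n = m - n + 1 from by omega]
      exact he' (m - n) (by omega)
  · intro m m' h1 h2
    show (if m < n then t m else t' (m - n)) < (if m' < n then t m' else t' (m' - n))
    by_cases c1 : m' < n
    · rw [if_pos (by omega : m < n), if_pos c1]
      exact hm m m' h1 c1
    · by_cases c2 : m < n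
      · rw [if_pos c2, if_neg c1]
        have hA : t m ≤ t (n - 1) := by
          rcases eq_or_lt_of_le (show m ≤ n - 1 from by omega) with h | h
          · rw [h]
          · exact le_of_lt (hm m (n - 1) h (by omega))
        have hB : t' 0 ≤ t' (m' - n) := by
          rcases Nat.eq_zero_or_pos (m' - n) with h | h
          · rw [h]
          · exact le_of_lt (hm' 0 (m' - n) h (by omega))
        have hC : t (n - 1) < σ' := by rw [htl]; exact hlt
        rw [ht0'] at hB
        omega
      · rw [if_neg c2, if_neg c1]
        exact hm' (m - n) (m' - n) (by omega) (by omega)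
  · show (if 0 < n then t 0 else t' (0 - n)) = σ
    rw [if_pos (by omega : 0 < n)]; exact ht0
  · show (if n + n' - 1 < n then t (n + n' - 1) else t' (n + n' - 1 - n)) = τ'
    rw [if_neg (by omega : ¬ n + n' - 1 < n), show n + n' - 1 - n = n' - 1 from by omega]
    exact htl'

lemma segment_walkTimed {p : TPath V} (hp : p.IsPathIn G) {r r' : ℕ}
    (hrr : r < r') (hr' : r' ≤ p.len) :
    G.WalkTimed (p.f r) (p.f r') (p.t r) (p.t (r' - 1)) := by
  refine ⟨r' - r, fun m => p.f (r + m), fun m => p.t (r + m), by omega, ?_, ?_, ?_, ?_, ?_, ?_⟩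
  · show p.f (r + 0) = p.f r
    rw [Nat.add_zero]
  · show p.f (r + (r' - r)) = p.f r'
    rw [show r + (r' - r) = r' from by omega]
  · intro m hm
    show (p.f (r + m), p.f (r + (m + 1)), p.t (r + m)) ∈ G.edges
    rw [show r + (m + 1) = r + m + 1 from by omega]
    exact hp.2.1 (r + m) (by omega)
  · intro m m' h1 h2
    exact hp.2.2.1 (r + m) (r + m') (by omega) (by omega)
  · show p.t (r + 0) = p.t r
    rw [Nat.add_zero]
  · show p.t (r + (r' - r - 1)) = p.t (r' - 1)
    rw [show r + (r' - r - 1) = r' - 1 from by omega]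

lemma WalkTimed.lastEdge {u v : V} {σ τ : ℕ} (h : G.WalkTimed u v σ τ) :
    ∃ x, (x, v, τ) ∈ G.edges := by
  obtain ⟨n, f, t, hn, hf0, hfn, he, hm, ht0, htl⟩ := h
  have h1 := he (n - 1) (by omega)
  rw [show n - 1 + 1 = n from by omega, hfn, htl] at h1
  exact ⟨f (n - 1), h1⟩

end TemporalGraph

/-- In a directed `k`-path temporal graph there is no configuration of `2k + 2`
pairwise distinct vertices `a₁, …, a_{k+1}, b₁, …, b_{k+1}` such that all `aᵢ` are
pairwise compatible, each `bᵢ` is compatible with every `a_j` for `j ≠ i`, and no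
`bᵢ` reaches `aᵢ`. -/
theorem no_shattering_configuration {V : Type*} [Fintype V] (k : ℕ) (hk : 1 ≤ k)
    (G : TemporalGraph V) (hG : G.IsKPathGraph k) :
    ¬ ∃ a b : Fin (k + 1) → V,
        (∀ i, a i ∈ G.verts) ∧ (∀ i, b i ∈ G.verts) ∧
        Function.Injective a ∧ Function.Injective b ∧
        (∀ i j, a i ≠ b j) ∧
        (∀ i j, i ≠ j → G.Compatible (a i) (a j)) ∧
        (∀ i j, i ≠ j → G.Compatible (b i) (a j)) ∧
        (∀ i, ¬ G.Reaches (b i) (a i)) := by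
  rintro ⟨a, b, -, -, ainj, -, hab, -, hBA, hnot⟩
  obtain ⟨P, hPpath, hPcov⟩ := hG
  classical
  -- `y j i` : the last edge label of a chosen walk from `b j` to `a i`
  let y : Fin (k + 1) → Fin (k + 1) → ℕ :=
    fun j i => sInf {τ | ∃ σ, G.WalkTimed (b j) (a i) σ τ}
  have hwalk : ∀ j i, j ≠ i → ∃ σ, G.WalkTimed (b j) (a i) σ (y j i) := by
    intro j i hji
    have hR : G.HasWalk (b j) (a i) := by
      rcases (hBA j i hji).1 with heq | hw
      · exact absurd heq.symm (hab i j)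
      · exact hw
    obtain ⟨σ, τ, hw⟩ := hR.walkTimed
    exact Nat.sInf_mem (⟨τ, σ, hw⟩ : {τ | ∃ σ, G.WalkTimed (b j) (a i) σ τ}.Nonempty)
  -- key claim
  have key : ∀ i j, j ≠ i → ∃ (p : Fin k) (s : ℕ), s ≤ (P p).len ∧
      (P p).f s = a i ∧
      ∀ r l, s < r → r ≤ (P p).len → (P p).f r = a l → l ≠ i → y j i < y l i := by
    intro i j hji
    obtain ⟨σ, hw⟩ := hwalk j i hji
    obtain ⟨x, hx⟩ := hw.lastEdge
    obtain ⟨p, hpmem, -⟩ := hPcov _ hx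
    obtain ⟨m, hmlen, heq⟩ := hpmem
    simp only [Prod.mk.injEq] at heq
    obtain ⟨-, hfa, hty⟩ := heq
    refine ⟨p, m + 1, by omega, hfa.symm, ?_⟩
    intro r l hr hrlen hfl hli
    have hseg := TemporalGraph.segment_walkTimed (G := G) (hPpath p) hr hrlen
    rw [← hfa, hfl] at hseg
    have hble : (P p).t (m + 1) ≤ y l i := by
      by_contra hcon
      push_neg at hcon
      obtain ⟨σ', hw'⟩ := hwalk l i hli
      have hcat := hw'.trans hseg hcon
      exact hnot l (Or.inr hcat.hasWalk)
    have hstep : (P p).t m < (P p).t (m + 1) :=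
      (hPpath p).2.2.1 m (m + 1) (by omega) (by omega)
    rw [hty]
    omega
  -- for each i, select the j with maximal y j i
  have hmaxsel : ∀ i : Fin (k + 1), ∃ j, j ≠ i ∧ ∀ l, l ≠ i → y l i ≤ y j i := by
    intro i
    have hne : (Finset.univ.erase i).Nonempty := by
      obtain ⟨j, hj⟩ := Fintype.exists_ne_of_one_lt_card
        (by simp only [Fintype.card_fin]; omega) i
      exact ⟨j, Finset.mem_erase.2 ⟨hj, Finset.mem_univ _⟩⟩
    obtain ⟨j, hjmem, hjmax⟩ := Finset.exists_max_image (Finset.univ.erase i) (fun l => y l i) hne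
    exact ⟨j, (Finset.mem_erase.1 hjmem).1,
      fun l hl => hjmax l (Finset.mem_erase.2 ⟨hl, Finset.mem_univ _⟩)⟩
  choose jm hjmne hjmax using hmaxsel
  choose pth ps hps2 hpsa hpskey using key
  -- pigeonhole on paths
  obtain ⟨i, i', hii, hEE⟩ := Fintype.exists_ne_map_eq_of_card_lt
      (fun i => pth i (jm i) (hjmne i)) (by simp only [Fintype.card_fin]; omega)
  have ha1 := hpsa i (jm i) (hjmne i)
  have ha2 : (P (pth i (jm i) (hjmne i))).f (ps i' (jm i') (hjmne i')) = a i' := by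
    rw [hEE]; exact hpsa i' (jm i') (hjmne i')
  have hl2 : ps i' (jm i') (hjmne i') ≤ (P (pth i (jm i) (hjmne i))).len := by
    rw [hEE]; exact hps2 i' (jm i') (hjmne i')
  have hns : ¬ ps i (jm i) (hjmne i) < ps i' (jm i') (hjmne i') := by
    intro hlt
    have hk1 := hpskey i (jm i) (hjmne i) _ i' hlt hl2 ha2 (Ne.symm hii)
    have hk2 := hjmax i i' (Ne.symm hii)
    omega
  have hns' : ¬ ps i' (jm i') (hjmne i') < ps i (jm i) (hjmne i) := by
    intro hlt
    have ha1' : (P (pth i' (jm i') (hjmne i'))).f (ps i (jm i) (hjmne i)) = a i := by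
      rw [← hEE]; exact ha1
    have hl1' : ps i (jm i) (hjmne i) ≤ (P (pth i' (jm i') (hjmne i'))).len := by
      rw [← hEE]; exact hps2 i (jm i) (hjmne i)
    have hk1 := hpskey i' (jm i') (hjmne i') _ i hlt hl1' ha1' hii
    have hk2 := hjmax i' i hii
    omega
  have hseq : ps i (jm i) (hjmne i) = ps i' (jm i') (hjmne i') := by omega
  have : a i = a i' := by rw [← ha1, ← ha2, hseq]
  exact hii (ainj this)
end

section
/- Let 𝒢 = (V, ℰ) be a directed k-path temporal graph with defining paths P₁, …, P_k, and let β be a bridge-vertex of 𝒢. Then no closed temporally connected set of cardinality at least 2 contains β; consequently, the only closed temporal connected component containing β is the singleton {β}. -/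
/-- `β` is a bridge-vertex with respect to the defining paths `P`: it is one of a
pair of consecutive vertices on some path `P i` neither of which occurs on any
other path `P j`, `j ≠ i`. -/
def IsBridgeVertex {V : Type*} {k : ℕ} (P : Fin k → TPath V) (β : V) : Prop :=
  ∃ (i : Fin k) (m : ℕ), m < (P i).len ∧
    (β = (P i).f m ∨ β = (P i).f (m + 1)) ∧
    (∀ j, j ≠ i → (P i).f m ∉ (P j).vertexSet) ∧
    (∀ j, j ≠ i → (P i).f (m + 1) ∉ (P j).vertexSet)

/-- A bridge-vertex of a `k`-path temporal graph lies in no closed temporally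
connected set of size at least `2`; consequently the only closed temporal connected
component containing it is the singleton. -/
theorem bridge_vertex_only_trivial_ctcc {V : Type*} [Fintype V] {k : ℕ}
    (G : TemporalGraph V) (P : Fin k → TPath V) (hP : G.IsPathDecomp P)
    (β : V) (hβ : IsBridgeVertex P β) :
    (∀ X : Set V, X ⊆ G.verts → G.ClosedTemporallyConnected X → 2 ≤ X.ncard → β ∉ X) ∧
    (∀ X : Set V, G.IsClosedTCC X → β ∈ X → X = {β}) := by
  obtain ⟨i, m, hm, hβeq, h1, h2⟩ := hβ
  obtain ⟨hlen, hedges, htmono, hinj⟩ := hP.1 i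
  set p := P i with hp
  have hmle : m + 1 ≤ p.len := hm
  have key : ∀ e ∈ G.edges,
      (e.1 = p.f m ∨ e.1 = p.f (m+1) ∨ e.2.1 = p.f m ∨ e.2.1 = p.f (m+1)) →
      ∃ m', m' < p.len ∧ e = (p.f m', p.f (m'+1), p.t m') := by
    intro e he hinc
    obtain ⟨j, hj, _⟩ := hP.2 e he
    obtain ⟨m', hm', hem⟩ := hj
    by_cases hji : j = i
    · subst hji; exact ⟨m', hm', hem⟩
    · exfalso
      have hv1 : e.1 ∈ (P j).vertexSet := ⟨m', hm'.le, by rw [hem]⟩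
      have hv2 : e.2.1 ∈ (P j).vertexSet := ⟨m'+1, hm', by rw [hem]⟩
      rcases hinc with h|h|h|h
      · exact h1 j hji (h ▸ hv1)
      · exact h2 j hji (h ▸ hv1)
      · exact h1 j hji (h ▸ hv2)
      · exact h2 j hji (h ▸ hv2)
  have hout1 : ∀ e ∈ G.edges, e.1 = p.f m → e.2.1 = p.f (m+1) ∧ e.2.2 = p.t m := by
    intro e he h
    obtain ⟨m', hm', hem⟩ := key e he (Or.inl h)
    have hmm : m' = m := hinj m' m hm'.le hm.le (by rw [← h, hem])
    subst hmm
    rw [hem]; exact ⟨rfl, rfl⟩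
  have hout2 : ∀ e ∈ G.edges, e.1 = p.f (m+1) →
      m + 1 < p.len ∧ e.2.1 = p.f (m+2) ∧ e.2.2 = p.t (m+1) := by
    intro e he h
    obtain ⟨m', hm', hem⟩ := key e he (Or.inr (Or.inl h))
    have hmm : m' = m + 1 := hinj m' (m+1) hm'.le hmle (by rw [← h, hem])
    subst hmm
    exact ⟨hm', by rw [hem], by rw [hem]⟩
  have hin1 : ∀ e ∈ G.edges, e.2.1 = p.f m → 1 ≤ m ∧ e.2.2 = p.t (m-1) := by
    intro e he h
    obtain ⟨m', hm', hem⟩ := key e he (Or.inr (Or.inr (Or.inl h)))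
    have hmm : m' + 1 = m := hinj (m'+1) m hm' hm.le (by rw [← h, hem])
    refine ⟨by omega, ?_⟩
    rw [hem]
    show p.t m' = p.t (m-1)
    congr 1
    omega
  have hin2 : ∀ e ∈ G.edges, e.2.1 = p.f (m+1) → e.1 = p.f m ∧ e.2.2 = p.t m := by
    intro e he h
    obtain ⟨m', hm', hem⟩ := key e he (Or.inr (Or.inr (Or.inr h)))
    have hmm : m' + 1 = m + 1 := hinj (m'+1) (m+1) hm' hmle (by rw [← h, hem])
    have hmm' : m' = m := by omega
    subst hmm'
    exact ⟨by rw [hem], by rw [hem]⟩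
  have hne : p.f m ≠ p.f (m+1) := by
    intro h
    have := hinj m (m+1) hm.le hmle h
    omega
  have noWalk : ∀ X : Set V, ¬ G.HasWalkWithin X (p.f (m+1)) (p.f m) := by
    rintro X ⟨n, f, t, hn, hf0, hfn, hE, hT, -⟩
    have he0 := hE 0 (by omega)
    obtain ⟨hlt2, hsnd, ht0⟩ := hout2 _ he0 hf0
    have hsnd' : f 1 = p.f (m+2) := hsnd
    have ht0' : t 0 = p.t (m+1) := ht0
    have heL := hE (n-1) (by omega)
    have hfnL : (f (n-1), f (n-1+1), t (n-1)).2.1 = p.f m := by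
      show f (n-1+1) = p.f m
      rw [show n-1+1 = n by omega]; exact hfn
    obtain ⟨hm1, htL⟩ := hin1 _ heL hfnL
    have htL' : t (n-1) = p.t (m-1) := htL
    rcases Nat.lt_or_ge 1 n with hn2 | hn1
    · have h01 : t 0 < t (n-1) := hT 0 (n-1) (by omega) (by omega)
      have hmono : p.t (m-1) < p.t (m+1) := htmono (m-1) (m+1) (by omega) hlt2
      omega
    · have hn1' : n = 1 := by omega
      subst hn1'
      have heq : p.f m = p.f (m+2) := hfn.symm.trans hsnd'
      have := hinj m (m+2) hm.le hlt2 heq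
      omega
  have main : ∀ X : Set V, G.ClosedTemporallyConnected X → β ∈ X → ∀ v ∈ X, v = β := by
    intro X hX hβX v hvX
    by_contra hvβ
    have hboth : p.f m ∈ X ∧ p.f (m+1) ∈ X := by
      rcases hβeq with hb | hb
      · subst hb
        obtain ⟨n, f, t, hn, hf0, hfn, hE, hT, hXm⟩ :=
          hX _ hβX v hvX (fun h => hvβ h.symm)
        have he0 := hE 0 (by omega)
        have h' : f 1 = p.f (m+1) := (hout1 _ he0 hf0).1
        have hmem : f 1 ∈ X := hXm 1 hn
        exact ⟨hβX, h' ▸ hmem⟩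
      · subst hb
        obtain ⟨n, f, t, hn, hf0, hfn, hE, hT, hXm⟩ := hX v hvX _ hβX hvβ
        have heL := hE (n-1) (by omega)
        have hfnL : (f (n-1), f (n-1+1), t (n-1)).2.1 = p.f (m+1) := by
          show f (n-1+1) = p.f (m+1)
          rw [show n-1+1 = n by omega]; exact hfn
        have h' : f (n-1) = p.f m := (hin2 _ heL hfnL).1
        have hmem : f (n-1) ∈ X := hXm (n-1) (by omega)
        exact ⟨h' ▸ hmem, hβX⟩
    exact noWalk X (hX _ hboth.2 _ hboth.1 (Ne.symm hne))
  constructor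
  · intro X _ hX hcard hβX
    obtain ⟨v, hvX, hvβ⟩ := Set.exists_ne_of_one_lt_ncard (show 1 < X.ncard by omega) β
    exact hvβ (main X hX hβX v hvX)
  · intro X hX hβX
    ext v
    simp only [Set.mem_singleton_iff]
    exact ⟨fun hv => main X hX.2.1 hβX v hv, fun hv => hv ▸ hβX⟩
end

section
/- Let 𝒢 = (V, ℰ) be a directed k-path temporal graph with defining paths P₁, …, P_k, and let 𝒢′ be the temporal graph obtained from 𝒢 by deleting every bridge-vertex together with all temporal edges incident to a bridge-vertex. Then a set X ⊆ V with |X| > 1 is a closed temporal connected component of 𝒢 if and only if it is a closed temporal connected component of 𝒢′. -/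
section AuxBridge

variable {V : Type*} {k : ℕ}

/-- Any edge of `G` leaving a vertex that occurs only on `P i`, at position `p`,
is the edge of `P i` at position `p`. -/
lemma aux_loc_out {G : TemporalGraph V} {P : Fin k → TPath V} (hP : G.IsPathDecomp P)
    {i : Fin k} {p : ℕ} (hp : p ≤ (P i).len)
    (hnot : ∀ j, j ≠ i → (P i).f p ∉ (P j).vertexSet)
    {e : V × V × ℕ} (he : e ∈ G.edges) (h1 : e.1 = (P i).f p) :
    p < (P i).len ∧ e.2.1 = (P i).f (p + 1) ∧ e.2.2 = (P i).t p := by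
  obtain ⟨j, hj, -⟩ := hP.2 e he
  obtain ⟨q, hq, heq⟩ := hj
  have hfq : (P j).f q = (P i).f p := by rw [heq] at h1; exact h1
  have hji : j = i := by
    by_contra hji
    exact hnot j hji ⟨q, le_of_lt hq, hfq.symm⟩
  subst hji
  have hqp : q = p := (hP.1 j).2.2.2 q p (le_of_lt hq) hp hfq
  subst hqp
  exact ⟨hq, by rw [heq], by rw [heq]⟩

/-- Any edge of `G` entering a vertex that occurs only on `P i`, at positive
position `p`, is the edge of `P i` at position `p - 1`. -/
lemma aux_loc_in {G : TemporalGraph V} {P : Fin k → TPath V} (hP : G.IsPathDecomp P)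
    {i : Fin k} {p : ℕ} (hp : p ≤ (P i).len)
    (hnot : ∀ j, j ≠ i → (P i).f p ∉ (P j).vertexSet)
    {e : V × V × ℕ} (he : e ∈ G.edges) (h1 : e.2.1 = (P i).f p) :
    ∃ q, q + 1 = p ∧ e.1 = (P i).f q ∧ e.2.2 = (P i).t q := by
  obtain ⟨j, hj, -⟩ := hP.2 e he
  obtain ⟨q, hq, heq⟩ := hj
  have hfq : (P j).f (q + 1) = (P i).f p := by rw [heq] at h1; exact h1
  have hji : j = i := by
    by_contra hji
    exact hnot j hji ⟨q + 1, hq, hfq.symm⟩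
  subst hji
  have hqp : q + 1 = p := (hP.1 j).2.2.2 (q + 1) p hq hp hfq
  exact ⟨q, hqp, by rw [heq], by rw [heq]⟩

/-- There is no strict temporal walk from the head of a bridge back to its tail. -/
lemma aux_no_walk_back {G : TemporalGraph V} {P : Fin k → TPath V}
    (hP : G.IsPathDecomp P) {i : Fin k} {m : ℕ} (hm : m < (P i).len)
    (h1 : ∀ j, j ≠ i → (P i).f m ∉ (P j).vertexSet)
    (h2 : ∀ j, j ≠ i → (P i).f (m + 1) ∉ (P j).vertexSet)
    (X : Set V) :
    ¬ G.HasWalkWithin X ((P i).f (m + 1)) ((P i).f m) := by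
  rintro ⟨n, g, s, hn, hg0, hgn, hge, hinc, -⟩
  -- the first edge leaves `f (m+1)`
  have hout := aux_loc_out hP hm (p := m + 1) h2 (hge 0 (by omega)) (by simpa using hg0)
  -- the last edge enters `f m`
  have hlast : (g (n - 1), g (n - 1 + 1), s (n - 1)) ∈ G.edges := hge (n - 1) (by omega)
  have hg' : (g (n - 1), g (n - 1 + 1), s (n - 1)).2.1 = (P i).f m := by
    simp only [Nat.sub_add_cancel hn, hgn]
  obtain ⟨q, hq1, -, hq3⟩ := aux_loc_in hP (le_of_lt hm) h1 hlast hg'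
  -- times
  have ht0 : s 0 = (P i).t (m + 1) := hout.2.2
  have htn : s (n - 1) = (P i).t q := hq3
  have hmono := (hP.1 i).2.2.1
  have hqm : q < m + 1 := by omega
  have htlt : (P i).t q < (P i).t (m + 1) := hmono q (m + 1) hqm hout.1
  rcases Nat.eq_or_lt_of_le hn with h1n | h1n
  · -- n = 1 : first edge = last edge
    have : s 0 = s (n - 1) := by rw [← h1n]
    omega
  · have : s 0 < s (n - 1) := hinc 0 (n - 1) (by omega) (by omega)
    omega

/-- A closed temporally connected set with at least two elements contains no
bridge-vertex. -/
lemma aux_no_bridge {G : TemporalGraph V} {P : Fin k → TPath V}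
    (hP : G.IsPathDecomp P) {X : Set V} (hXc : G.ClosedTemporallyConnected X)
    (hpair : ∃ u ∈ X, ∃ v ∈ X, u ≠ v) :
    ∀ β ∈ X, ¬ IsBridgeVertex P β := by
  rintro β hβ ⟨i, m, hm, hβeq, h1, h2⟩
  have hne12 : (P i).f m ≠ (P i).f (m + 1) := by
    intro h
    have := (hP.1 i).2.2.2 m (m + 1) (le_of_lt hm) hm h
    omega
  -- show both bridge endpoints are in X
  have hboth : (P i).f m ∈ X ∧ (P i).f (m + 1) ∈ X := by
    obtain ⟨u, hu, v, hv, huv⟩ := hpair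
    rcases hβeq with hb | hb
    · -- β is the tail; a walk out of β passes through the head
      subst hb
      have hex : ∃ w ∈ X, w ≠ (P i).f m := by
        rcases eq_or_ne u ((P i).f m) with h | h
        · exact ⟨v, hv, by rw [← h]; exact huv.symm⟩
        · exact ⟨u, hu, h⟩
      obtain ⟨w, hw, hwne⟩ := hex
      obtain ⟨n, g, s, hn, hg0, -, hge, -, hmem⟩ := hXc _ hβ _ hw hwne.symm
      have hout := aux_loc_out hP (le_of_lt hm) h1 (hge 0 (by omega)) (by simpa using hg0)
      have : g 1 = (P i).f (m + 1) := by simpa using hout.2.1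
      exact ⟨hβ, this ▸ hmem 1 hn⟩
    · -- β is the head; a walk into β passes through the tail
      subst hb
      have hex : ∃ w ∈ X, w ≠ (P i).f (m + 1) := by
        rcases eq_or_ne u ((P i).f (m + 1)) with h | h
        · exact ⟨v, hv, by rw [← h]; exact huv.symm⟩
        · exact ⟨u, hu, h⟩
      obtain ⟨w, hw, hwne⟩ := hex
      obtain ⟨n, g, s, hn, -, hgn, hge, -, hmem⟩ := hXc _ hw _ hβ hwne
      have hlast : (g (n - 1), g (n - 1 + 1), s (n - 1)) ∈ G.edges := hge (n - 1) (by omega)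
      have hg' : (g (n - 1), g (n - 1 + 1), s (n - 1)).2.1 = (P i).f (m + 1) := by
        simp only [Nat.sub_add_cancel hn, hgn]
      obtain ⟨q, hq1, hq2, -⟩ := aux_loc_in hP hm h2 hlast hg'
      have hqm : q = m := by omega
      subst hqm
      exact ⟨hq2 ▸ hmem (n - 1) (by omega), hβ⟩
  -- now a walk from the head back to the tail exists, contradiction
  exact aux_no_walk_back hP hm h1 h2 X
    (hXc _ hboth.2 _ hboth.1 hne12.symm)

/-- Walks are preserved under enlarging the edge set. -/
lemma aux_walk_mono {G G' : TemporalGraph V} (hsub : G'.edges ⊆ G.edges)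
    {X : Set V} {u v : V} (h : G'.HasWalkWithin X u v) : G.HasWalkWithin X u v := by
  obtain ⟨n, g, s, hn, hg0, hgn, hge, hinc, hmem⟩ := h
  exact ⟨n, g, s, hn, hg0, hgn, fun m hm => hsub (hge m hm), hinc, hmem⟩

lemma aux_closed_of_sub {G G' : TemporalGraph V} (hsub : G'.edges ⊆ G.edges)
    {X : Set V} (h : G'.ClosedTemporallyConnected X) :
    G.ClosedTemporallyConnected X :=
  fun u hu v hv huv => aux_walk_mono hsub (h u hu v hv huv)

lemma aux_closed_to' {G G' : TemporalGraph V} {P : Fin k → TPath V}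
    (hedges : G'.edges =
      {e ∈ G.edges | ¬ IsBridgeVertex P e.1 ∧ ¬ IsBridgeVertex P e.2.1})
    {X : Set V} (h : G.ClosedTemporallyConnected X)
    (hnb : ∀ β ∈ X, ¬ IsBridgeVertex P β) :
    G'.ClosedTemporallyConnected X := by
  intro u hu v hv huv
  obtain ⟨n, g, s, hn, hg0, hgn, hge, hinc, hmem⟩ := h u hu v hv huv
  refine ⟨n, g, s, hn, hg0, hgn, fun m hm => ?_, hinc, hmem⟩
  rw [hedges]
  exact ⟨hge m hm, hnb _ (hmem m (le_of_lt hm)), hnb _ (hmem (m + 1) hm)⟩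

end AuxBridge

/-- Deleting all bridge-vertices (and the temporal edges incident to them) from a
`k`-path temporal graph does not change the closed temporal connected components of
size greater than `1`. -/
theorem ctcc_invariant_under_bridge_deletion {V : Type*} [Fintype V] {k : ℕ}
    (G G' : TemporalGraph V) (P : Fin k → TPath V) (hP : G.IsPathDecomp P)
    (hverts : G'.verts = G.verts \ {v | IsBridgeVertex P v})
    (hedges : G'.edges =
      {e ∈ G.edges | ¬ IsBridgeVertex P e.1 ∧ ¬ IsBridgeVertex P e.2.1})
    (X : Set V) (hX : 1 < X.ncard) :
    G.IsClosedTCC X ↔ G'.IsClosedTCC X := by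
  have hsub : G'.edges ⊆ G.edges := by rw [hedges]; exact Set.sep_subset _ _
  have hpair : ∃ u ∈ X, ∃ v ∈ X, u ≠ v := by
    rw [Set.one_lt_ncard_iff X.toFinite] at hX
    obtain ⟨u, v, hu, hv, huv⟩ := hX
    exact ⟨u, hu, v, hv, huv⟩
  constructor
  · rintro ⟨hXv, hXc, hXmax⟩
    have hnb := aux_no_bridge hP hXc hpair
    refine ⟨fun x hx => ?_, aux_closed_to' hedges hXc hnb, ?_⟩
    · rw [hverts]; exact ⟨hXv hx, hnb x hx⟩
    · intro Y hYv hYc hXY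
      refine hXmax Y (fun y hy => ?_) (aux_closed_of_sub hsub hYc) hXY
      have := hYv hy
      rw [hverts] at this
      exact this.1
  · rintro ⟨hXv, hXc, hXmax⟩
    refine ⟨fun x hx => ?_, aux_closed_of_sub hsub hXc, ?_⟩
    · have := hXv hx; rw [hverts] at this; exact this.1
    · intro Y hYv hYc hXY
      have hpairY : ∃ u ∈ Y, ∃ v ∈ Y, u ≠ v := by
        obtain ⟨u, hu, v, hv, huv⟩ := hpair
        exact ⟨u, hXY hu, v, hXY hv, huv⟩
      have hnbY := aux_no_bridge hP hYc hpairY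
      refine hXmax Y (fun y hy => ?_) (aux_closed_to' hedges hYc hnbY) hXY
      rw [hverts]; exact ⟨hYv hy, hnbY y hy⟩
end

section
/- Let 𝒢 = (V, ℰ) be a directed temporal graph, let x_in, x_out ∈ V be distinct, and let α < ω be time labels such that: the temporal edges of 𝒢 incident to x_in or x_out are exactly the four gadget edges (x_in, x_out, α), (x_out, x_in, α), (x_in, x_out, ω), (x_out, x_in, ω), together with some edges of the form (u, x_in, t) with u ∉ {x_in, x_out} and α < t < ω, and some edges of the form (x_out, w, t) with w ∉ {x_in, x_out} and α < t < ω; moreover, every temporal edge of 𝒢 not incident to {x_in, x_out} has a label strictly between α and ω. Then: (i) no strict temporal walk of 𝒢 contains an edge (u, x_in, t) with u ∉ {x_in, x_out} and, at a later position, an edge (x_out, w, t′) with w ∉ {x_in, x_out}; (ii) for every vertex v ∉ {x_in, x_out}, x_in reaches v if and only if x_out reaches v, and v reaches x_in if and only if v reaches x_out; (iii) x_in and x_out are compatible. -/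
section Helpers

variable {V : Type*} {G : TemporalGraph V}

private lemma walk_single {u v : V} {s : ℕ} (h : (u, v, s) ∈ G.edges) :
    G.HasWalk u v := by
  refine ⟨1, fun k => if k = 0 then u else v, fun _ => s, le_rfl, rfl, rfl, ?_,
    by intro m m' h1 h2; omega, fun _ _ => Set.mem_univ _⟩
  intro m hm
  have hm0 : m = 0 := by omega
  subst hm0
  simpa using h

private lemma walk_drop {n : ℕ} {f : ℕ → V} {t : ℕ → ℕ} {v : V}
    (hn : 2 ≤ n) (hfn : f n = v)
    (he : ∀ m, m < n → (f m, f (m + 1), t m) ∈ G.edges)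
    (hi : ∀ m m', m < m' → m' < n → t m < t m') :
    G.HasWalk (f 1) v := by
  refine ⟨n - 1, fun k => f (k + 1), fun k => t (k + 1), by omega, rfl, ?_, ?_, ?_,
    fun _ _ => Set.mem_univ _⟩
  · have h1 : n - 1 + 1 = n := by omega
    simp only [h1, hfn]
  · intro m hm; exact he (m + 1) (by omega)
  · intro m m' h h'; exact hi (m + 1) (m' + 1) (by omega) (by omega)

private lemma walk_dropLast {n : ℕ} {f : ℕ → V} {t : ℕ → ℕ} {u : V}
    (hn : 2 ≤ n) (hf0 : f 0 = u)
    (he : ∀ m, m < n → (f m, f (m + 1), t m) ∈ G.edges)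
    (hi : ∀ m m', m < m' → m' < n → t m < t m') :
    G.HasWalk u (f (n - 1)) :=
  ⟨n - 1, f, t, by omega, hf0, rfl, fun m hm => he m (by omega),
    fun m m' h h' => hi m m' h (by omega), fun _ _ => Set.mem_univ _⟩

private lemma walk_prepend {n : ℕ} {f : ℕ → V} {t : ℕ → ℕ} {v w : V} {s : ℕ}
    (hn : 1 ≤ n) (hfn : f n = v)
    (he : ∀ m, m < n → (f m, f (m + 1), t m) ∈ G.edges)
    (hi : ∀ m m', m < m' → m' < n → t m < t m')
    (hw : (w, f 0, s) ∈ G.edges) (hs : s < t 0) :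
    G.HasWalk w v := by
  refine ⟨n + 1, fun k => if k = 0 then w else f (k - 1), fun k => if k = 0 then s else t (k - 1),
    by omega, rfl, ?_, ?_, ?_, fun _ _ => Set.mem_univ _⟩
  · simp [hfn]
  · intro m hm
    rcases Nat.eq_zero_or_pos m with h0 | h0
    · subst h0; simpa using hw
    · have h1 : m ≠ 0 := by omega
      have h2 : m + 1 ≠ 0 := by omega
      simp only [if_neg h1, if_neg h2]
      have h3 : m + 1 - 1 = m - 1 + 1 := by omega
      rw [h3]
      exact he (m - 1) (by omega)
  · intro m m' h h'
    have h2 : m' ≠ 0 := by omega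
    rcases Nat.eq_zero_or_pos m with h0 | h0
    · subst h0
      simp only [if_pos rfl, if_neg h2]
      rcases Nat.lt_or_ge 0 (m' - 1) with hc | hc
      · exact lt_trans hs (hi 0 (m' - 1) hc (by omega))
      · have h3 : m' - 1 = 0 := by omega
        rw [h3]; exact hs
    · have h1 : m ≠ 0 := by omega
      simp only [if_neg h1, if_neg h2]
      exact hi (m - 1) (m' - 1) (by omega) (by omega)

private lemma walk_append {n : ℕ} {f : ℕ → V} {t : ℕ → ℕ} {u v w : V} {s : ℕ}
    (hn : 1 ≤ n) (hf0 : f 0 = u) (hfn : f n = v)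
    (he : ∀ m, m < n → (f m, f (m + 1), t m) ∈ G.edges)
    (hi : ∀ m m', m < m' → m' < n → t m < t m')
    (hw : (v, w, s) ∈ G.edges) (hs : ∀ m, m < n → t m < s) :
    G.HasWalk u w := by
  refine ⟨n + 1, fun k => if k ≤ n then f k else w, fun k => if k < n then t k else s,
    by omega, ?_, ?_, ?_, ?_, fun _ _ => Set.mem_univ _⟩
  · simpa using hf0
  · simp
  · intro m hm
    rcases Nat.lt_or_ge m n with h | h
    · simp only [if_pos (by omega : m ≤ n), if_pos (by omega : m + 1 ≤ n), if_pos h]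
      exact he m h
    · have hm' : m = n := by omega
      subst hm'
      simp only [if_pos le_rfl, if_neg (by omega : ¬ m + 1 ≤ m), if_neg (lt_irrefl m)]
      rw [hfn]; exact hw
  · intro m m' h h'
    have hm : m < n := by omega
    rcases Nat.lt_or_ge m' n with hc | hc
    · simp only [if_pos hm, if_pos hc]; exact hi m m' h hc
    · simp only [if_pos hm, if_neg (by omega : ¬ m' < n)]; exact hs m hm

end Helpers

/-- Properties of the non-transitivity gadget `{x_in, x_out}`: (i) no strict
temporal walk uses an edge entering `x_in` from outside the gadget and, later, an
edge leaving `x_out` to outside the gadget; (ii) `x_in` and `x_out` reach, and are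
reached by, exactly the same vertices outside the gadget; (iii) `x_in` and `x_out`
are compatible. -/
theorem nontransitivity_gadget {V : Type*} [Fintype V] (G : TemporalGraph V)
    (xin xout : V) (hne : xin ≠ xout) (α ω : ℕ) (hαω : α < ω)
    (hgadget : (xin, xout, α) ∈ G.edges ∧ (xout, xin, α) ∈ G.edges ∧
               (xin, xout, ω) ∈ G.edges ∧ (xout, xin, ω) ∈ G.edges)
    (hinc : ∀ e ∈ G.edges,
      (e.1 = xin ∨ e.1 = xout ∨ e.2.1 = xin ∨ e.2.1 = xout) →
      ((e = (xin, xout, α) ∨ e = (xout, xin, α) ∨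
        e = (xin, xout, ω) ∨ e = (xout, xin, ω)) ∨
       (e.2.1 = xin ∧ e.1 ≠ xin ∧ e.1 ≠ xout ∧ α < e.2.2 ∧ e.2.2 < ω) ∨
       (e.1 = xout ∧ e.2.1 ≠ xin ∧ e.2.1 ≠ xout ∧ α < e.2.2 ∧ e.2.2 < ω)))
    (hother : ∀ e ∈ G.edges,
      (e.1 ≠ xin ∧ e.1 ≠ xout ∧ e.2.1 ≠ xin ∧ e.2.1 ≠ xout) →
      α < e.2.2 ∧ e.2.2 < ω) :
    (∀ (n : ℕ) (f : ℕ → V) (tt : ℕ → ℕ),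
        1 ≤ n →
        (∀ m, m < n → (f m, f (m + 1), tt m) ∈ G.edges) →
        (∀ m m', m < m' → m' < n → tt m < tt m') →
        ¬ ∃ m m', m < m' ∧ m' < n ∧
          (f (m + 1) = xin ∧ f m ≠ xin ∧ f m ≠ xout) ∧
          (f m' = xout ∧ f (m' + 1) ≠ xin ∧ f (m' + 1) ≠ xout)) ∧
    (∀ v : V, v ≠ xin → v ≠ xout →
      (G.Reaches xin v ↔ G.Reaches xout v) ∧
      (G.Reaches v xin ↔ G.Reaches v xout)) ∧
    G.Compatible xin xout := by
  -- Edge classification facts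
  have factA : ∀ e ∈ G.edges, e.1 = xin → e.2.1 = xout ∧ (e.2.2 = α ∨ e.2.2 = ω) := by
    intro e he h
    rcases hinc e he (Or.inl h) with (h1 | h1 | h1 | h1) | ⟨h1, h2, h3, h4, h5⟩ | ⟨h1, h2, h3, h4, h5⟩
    · subst h1; exact ⟨rfl, Or.inl rfl⟩
    · subst h1; exact absurd h.symm hne
    · subst h1; exact ⟨rfl, Or.inr rfl⟩
    · subst h1; exact absurd h.symm hne
    · exact absurd h h2
    · exact absurd (h1.symm.trans h) (Ne.symm hne)
  have factB : ∀ e ∈ G.edges, e.2.1 = xout → e.1 = xin := by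
    intro e he h
    rcases hinc e he (Or.inr (Or.inr (Or.inr h))) with (h1 | h1 | h1 | h1) | ⟨h1, h2, h3, h4, h5⟩ | ⟨h1, h2, h3, h4, h5⟩
    · subst h1; rfl
    · subst h1; exact absurd h hne
    · subst h1; rfl
    · subst h1; exact absurd h hne
    · exact absurd (h1.symm.trans h) hne
    · exact absurd h h3
  have factC : ∀ e ∈ G.edges, e.1 = xout →
      (e.2.1 = xin ∧ (e.2.2 = α ∨ e.2.2 = ω)) ∨
      (e.2.1 ≠ xin ∧ e.2.1 ≠ xout ∧ α < e.2.2 ∧ e.2.2 < ω) := by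
    intro e he h
    rcases hinc e he (Or.inr (Or.inl h)) with (h1 | h1 | h1 | h1) | ⟨h1, h2, h3, h4, h5⟩ | ⟨h1, h2, h3, h4, h5⟩
    · subst h1; exact absurd h hne
    · subst h1; exact Or.inl ⟨rfl, Or.inl rfl⟩
    · subst h1; exact absurd h hne
    · subst h1; exact Or.inl ⟨rfl, Or.inr rfl⟩
    · exact absurd h h3
    · exact Or.inr ⟨h2, h3, h4, h5⟩
  have factD : ∀ e ∈ G.edges, e.2.1 = xin →
      (e.1 = xout ∧ (e.2.2 = α ∨ e.2.2 = ω)) ∨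
      (e.1 ≠ xin ∧ e.1 ≠ xout ∧ α < e.2.2 ∧ e.2.2 < ω) := by
    intro e he h
    rcases hinc e he (Or.inr (Or.inr (Or.inl h))) with (h1 | h1 | h1 | h1) | ⟨h1, h2, h3, h4, h5⟩ | ⟨h1, h2, h3, h4, h5⟩
    · subst h1; exact absurd h hne.symm
    · subst h1; exact Or.inl ⟨rfl, Or.inl rfl⟩
    · subst h1; exact absurd h hne.symm
    · subst h1; exact Or.inl ⟨rfl, Or.inr rfl⟩
    · exact Or.inr ⟨h2, h3, h4, h5⟩
    · exact absurd h h2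
  refine ⟨?_, ?_, ?_⟩
  · -- Part (i)
    rintro n f tt hn he hi ⟨m, m', hmm', hm'n, ⟨h1, h2, h3⟩, ⟨h4, h5, h6⟩⟩
    have em := he m (by omega)
    rw [h1] at em
    have hαm : α < tt m := by
      rcases factD _ em rfl with ⟨hx, -⟩ | ⟨-, -, hx, -⟩
      · exact absurd hx h3
      · exact hx
    have em' := he m' (by omega)
    rw [h4] at em'
    have hm'ω : tt m' < ω := by
      rcases factC _ em' rfl with ⟨hx, -⟩ | ⟨-, -, -, hx⟩
      · exact absurd hx h5
      · exact hx
    have hlt : m + 1 < m' := by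
      rcases Nat.lt_or_ge (m + 1) m' with h | h
      · exact h
      · have heq : m + 1 = m' := by omega
        rw [heq, h4] at h1
        exact absurd h1.symm hne
    have em1 := he (m + 1) (by omega)
    obtain ⟨-, hval⟩ := factA _ em1 h1
    have hval' : tt (m + 1) = α ∨ tt (m + 1) = ω := hval
    have h01 : tt m < tt (m + 1) := hi m (m + 1) (by omega) (by omega)
    have h12 : tt (m + 1) < tt m' := hi (m + 1) m' hlt (by omega)
    rcases hval' with h | h <;> omega
  · -- Part (ii)
    intro v hv1 hv2
    constructor
    · constructor
      · rintro (rfl | ⟨n, f, t, hn, hf0, hfn, he, hi, -⟩)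
        · exact absurd rfl hv1
        · have e0 := he 0 (by omega)
          rw [hf0] at e0
          obtain ⟨hf1, -⟩ := factA _ e0 rfl
          have hf1' : f 1 = xout := hf1
          have hn2 : 2 ≤ n := by
            by_contra h
            have hn1 : n = 1 := by omega
            rw [hn1] at hfn
            rw [hfn] at hf1'
            exact hv2 hf1'
          exact Or.inr (hf1' ▸ walk_drop hn2 hfn he hi)
      · rintro (rfl | ⟨n, f, t, hn, hf0, hfn, he, hi, -⟩)
        · exact absurd rfl hv2
        · have e0 := he 0 (by omega)
          rw [hf0] at e0
          rcases factC _ e0 rfl with ⟨hf1, -⟩ | ⟨-, -, hα0, -⟩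
          · have hf1' : f 1 = xin := hf1
            have hn2 : 2 ≤ n := by
              by_contra h
              have hn1 : n = 1 := by omega
              rw [hn1] at hfn
              rw [hfn] at hf1'
              exact hv1 hf1'
            exact Or.inr (hf1' ▸ walk_drop hn2 hfn he hi)
          · refine Or.inr (walk_prepend hn hfn he hi ?_ hα0)
            rw [hf0]; exact hgadget.1
    · constructor
      · rintro (rfl | ⟨n, f, t, hn, hf0, hfn, he, hi, -⟩)
        · exact absurd rfl (Ne.symm hv1)
        · have en := he (n - 1) (by omega)
          have hsucc : n - 1 + 1 = n := by omega
          rw [hsucc, hfn] at en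
          rcases factD _ en rfl with ⟨hfn1, -⟩ | ⟨-, -, -, hωn0⟩
          · have hfn1' : f (n - 1) = xout := hfn1
            have hn2 : 2 ≤ n := by
              by_contra h
              have hn1 : n = 1 := by omega
              rw [hn1] at hfn1'
              rw [hf0] at hfn1'
              exact hv2 hfn1'
            exact Or.inr (hfn1' ▸ walk_dropLast hn2 hf0 he hi)
          · have hωn : t (n - 1) < ω := hωn0
            refine Or.inr (walk_append hn hf0 hfn he hi hgadget.2.2.1 ?_)
            intro m hm
            rcases Nat.lt_or_ge m (n - 1) with h | h
            · exact lt_trans (hi m (n - 1) h (by omega)) hωn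
            · have hmeq : m = n - 1 := by omega
              rw [hmeq]; exact hωn
      · rintro (rfl | ⟨n, f, t, hn, hf0, hfn, he, hi, -⟩)
        · exact absurd rfl (Ne.symm hv2)
        · have en := he (n - 1) (by omega)
          have hsucc : n - 1 + 1 = n := by omega
          rw [hsucc, hfn] at en
          have hfn1 : f (n - 1) = xin := factB _ en rfl
          have hn2 : 2 ≤ n := by
            by_contra h
            have hn1 : n = 1 := by omega
            rw [hn1] at hfn1
            rw [hf0] at hfn1
            exact hv1 hfn1
          exact Or.inr (hfn1 ▸ walk_dropLast hn2 hf0 he hi)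
  · -- Part (iii)
    exact ⟨Or.inr (walk_single hgadget.1), Or.inr (walk_single hgadget.2.1)⟩
end

section
/- Let I be a finite set, let π : I → ℕ be injective with π(e) ≥ 1 for all e ∈ I, and let 𝒢 = (V, ℰ) be the directed temporal graph with vertex set consisting of pairwise distinct vertices ℓ_e (e ∈ I), r_e (e ∈ I), s₁, s₂, and whose temporal edges are exactly (ℓ_e, s₁, 2π(e)−1), (s₁, r_e, 2π(e)), (r_e, s₂, 2π(e)), and (s₂, ℓ_e, 2π(e)+1) for e ∈ I. Then for all e, f ∈ I: (1) ℓ_e reaches r_f if and only if π(e) ≤ π(f); (2) r_f reaches ℓ_e if and only if π(f) ≤ π(e); and consequently (3) ℓ_e and r_f are compatible if and only if e = f. -/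
/-- The local identity gadget: with pairwise distinct vertices `l e`, `r e`
(`e ∈ I`), `s₁`, `s₂` and edges `(l e, s₁, 2π(e)−1)`, `(s₁, r e, 2π(e))`,
`(r e, s₂, 2π(e))`, `(s₂, l e, 2π(e)+1)`, we have `l e ⤳ r f` iff `π e ≤ π f`,
`r f ⤳ l e` iff `π f ≤ π e`, and `l e` and `r f` are compatible iff `e = f`. -/
theorem identity_gadget {I V : Type*} [Fintype I] [Fintype V]
    (π : I → ℕ) (hπinj : Function.Injective π) (hπ1 : ∀ e, 1 ≤ π e)
    (l r : I → V) (s₁ s₂ : V)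
    (hl : Function.Injective l) (hr : Function.Injective r)
    (hlr : ∀ e f, l e ≠ r f)
    (hls : ∀ e, l e ≠ s₁ ∧ l e ≠ s₂) (hrs : ∀ e, r e ≠ s₁ ∧ r e ≠ s₂)
    (hs : s₁ ≠ s₂)
    (G : TemporalGraph V)
    (hV : G.verts = Set.range l ∪ Set.range r ∪ {s₁, s₂})
    (hE : G.edges =
      {x | ∃ e : I, x = (l e, s₁, 2 * π e - 1)} ∪
      {x | ∃ e : I, x = (s₁, r e, 2 * π e)} ∪
      {x | ∃ e : I, x = (r e, s₂, 2 * π e)} ∪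
      {x | ∃ e : I, x = (s₂, l e, 2 * π e + 1)}) :
    ∀ e f : I,
      (G.Reaches (l e) (r f) ↔ π e ≤ π f) ∧
      (G.Reaches (r f) (l e) ↔ π f ≤ π e) ∧
      (G.Compatible (l e) (r f) ↔ e = f) := by
  intro e f
  have hedge : ∀ u v t, (u, v, t) ∈ G.edges ↔
      (∃ g, u = l g ∧ v = s₁ ∧ t = 2 * π g - 1) ∨
      (∃ g, u = s₁ ∧ v = r g ∧ t = 2 * π g) ∨
      (∃ g, u = r g ∧ v = s₂ ∧ t = 2 * π g) ∨
      (∃ g, u = s₂ ∧ v = l g ∧ t = 2 * π g + 1) := by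
    intro u v t
    rw [hE]
    simp only [Set.mem_union, Set.mem_setOf_eq]
    constructor
    · rintro (((⟨g, hg⟩ | ⟨g, hg⟩) | ⟨g, hg⟩) | ⟨g, hg⟩) <;>
        simp only [Prod.mk.injEq] at hg
      · exact Or.inl ⟨g, hg.1, hg.2.1, hg.2.2⟩
      · exact Or.inr (Or.inl ⟨g, hg.1, hg.2.1, hg.2.2⟩)
      · exact Or.inr (Or.inr (Or.inl ⟨g, hg.1, hg.2.1, hg.2.2⟩))
      · exact Or.inr (Or.inr (Or.inr ⟨g, hg.1, hg.2.1, hg.2.2⟩))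
    · rintro (⟨g, ha, hb, hc⟩ | ⟨g, ha, hb, hc⟩ | ⟨g, ha, hb, hc⟩ | ⟨g, ha, hb, hc⟩) <;>
        subst ha <;> subst hb <;> subst hc
      · exact Or.inl (Or.inl (Or.inl ⟨g, rfl⟩))
      · exact Or.inl (Or.inl (Or.inr ⟨g, rfl⟩))
      · exact Or.inl (Or.inr ⟨g, rfl⟩)
      · exact Or.inr ⟨g, rfl⟩
  have h1 : G.Reaches (l e) (r f) ↔ π e ≤ π f := by
    constructor
    · rintro (h | ⟨n, F, T, hn, h0, hN, hEdges, hMono, -⟩)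
      · exact absurd h (hlr e f)
      · have e0 := (hedge _ _ _).mp (hEdges 0 hn)
        rw [h0] at e0
        rcases e0 with ⟨g, hg1, hg2, hg3⟩ | ⟨g, hg1, -⟩ | ⟨g, hg1, -⟩ | ⟨g, hg1, -⟩
        · obtain rfl : e = g := hl hg1
          have hn2 : 2 ≤ n := by
            rcases Nat.lt_or_ge n 2 with h | h
            · obtain rfl : n = 1 := by omega
              rw [hN] at hg2; exact absurd hg2 (hrs f).1
            · exact h
          have e1 := (hedge _ _ _).mp (hEdges 1 (by omega))
          rw [hg2] at e1
          rcases e1 with ⟨g', hg1', -⟩ | ⟨g', -, hg2', hg3'⟩ | ⟨g', hg1', -⟩ | ⟨g', hg1', -⟩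
          · exact absurd hg1'.symm (hls g').1
          · have hmono01 := hMono 0 1 (by omega) (by omega)
            rw [hg3, hg3'] at hmono01
            have hle : π e ≤ π g' := by have := hπ1 e; omega
            have hn3 : n = 2 := by
              by_contra hne
              have hn3' : 3 ≤ n := by omega
              have e2 := (hedge _ _ _).mp (hEdges 2 (by omega))
              rw [hg2'] at e2
              rcases e2 with ⟨g'', hg1'', -⟩ | ⟨g'', hg1'', -⟩ | ⟨g'', hg1'', -, hg3''⟩ | ⟨g'', hg1'', -⟩
              · exact absurd hg1'' (hlr g'' g').symm
              · exact absurd hg1'' (hrs g').1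
              · obtain rfl : g' = g'' := hr hg1''
                have := hMono 1 2 (by omega) (by omega)
                rw [hg3', hg3''] at this
                omega
              · exact absurd hg1'' (hrs g').2
            rw [hn3] at hN
            rw [hN] at hg2'
            obtain rfl : f = g' := hr hg2'
            exact hle
          · exact absurd hg1'.symm (hrs g').1
          · exact absurd hg1' hs
        · exact absurd hg1 (hls e).1
        · exact absurd hg1 (hlr e g)
        · exact absurd hg1 (hls e).2
    · intro hef
      right
      refine ⟨2, fun m => if m = 0 then l e else if m = 1 then s₁ else r f,
        fun m => if m = 0 then 2 * π e - 1 else 2 * π f, by omega, rfl, rfl, ?_, ?_, fun _ _ => trivial⟩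
      · intro m hm
        interval_cases m
        · simp only [if_pos rfl, if_neg one_ne_zero]
          exact (hedge _ _ _).mpr (Or.inl ⟨e, rfl, rfl, rfl⟩)
        · norm_num
          exact (hedge _ _ _).mpr (Or.inr (Or.inl ⟨f, rfl, rfl, rfl⟩))
      · intro m m' hmm hm2
        have hm0 : m = 0 := by omega
        have hm1 : m' = 1 := by omega
        subst hm0 hm1
        have h01 : 2 * π e - 1 < 2 * π f := by have := hπ1 e; omega
        simpa using h01
  have h2 : G.Reaches (r f) (l e) ↔ π f ≤ π e := by
    constructor
    · rintro (h | ⟨n, F, T, hn, h0, hN, hEdges, hMono, -⟩)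
      · exact absurd h.symm (hlr e f)
      · have e0 := (hedge _ _ _).mp (hEdges 0 hn)
        rw [h0] at e0
        rcases e0 with ⟨g, hg1, -⟩ | ⟨g, hg1, -⟩ | ⟨g, hg1, hg2, hg3⟩ | ⟨g, hg1, -⟩
        · exact absurd hg1 (hlr g f).symm
        · exact absurd hg1 (hrs f).1
        · obtain rfl : f = g := hr hg1
          have hn2 : 2 ≤ n := by
            rcases Nat.lt_or_ge n 2 with h | h
            · obtain rfl : n = 1 := by omega
              rw [hN] at hg2; exact absurd hg2 (hls e).2
            · exact h
          have e1 := (hedge _ _ _).mp (hEdges 1 (by omega))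
          rw [hg2] at e1
          rcases e1 with ⟨g', hg1', -⟩ | ⟨g', hg1', -⟩ | ⟨g', hg1', -⟩ | ⟨g', -, hg2', hg3'⟩
          · exact absurd hg1'.symm (hls g').2
          · exact absurd hg1' hs.symm
          · exact absurd hg1'.symm (hrs g').2
          · have hmono01 := hMono 0 1 (by omega) (by omega)
            rw [hg3, hg3'] at hmono01
            have hle : π f ≤ π g' := by omega
            have hn3 : n = 2 := by
              by_contra hne
              have e2 := (hedge _ _ _).mp (hEdges 2 (by omega))
              rw [hg2'] at e2
              rcases e2 with ⟨g'', hg1'', -, hg3''⟩ | ⟨g'', hg1'', -⟩ | ⟨g'', hg1'', -⟩ | ⟨g'', hg1'', -⟩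
              · obtain rfl : g' = g'' := hl hg1''
                have := hMono 1 2 (by omega) (by omega)
                rw [hg3', hg3''] at this
                have := hπ1 g'
                omega
              · exact absurd hg1'' (hls g').1
              · exact absurd hg1'' (hlr g' g'')
              · exact absurd hg1'' (hls g').2
            rw [hn3] at hN
            rw [hN] at hg2'
            obtain rfl : e = g' := hl hg2'
            exact hle
        · exact absurd hg1 (hrs f).2
    · intro hef
      right
      refine ⟨2, fun m => if m = 0 then r f else if m = 1 then s₂ else l e,
        fun m => if m = 0 then 2 * π f else 2 * π e + 1, by omega, rfl, rfl, ?_, ?_, fun _ _ => trivial⟩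
      · intro m hm
        interval_cases m
        · simp only [if_pos rfl, if_neg one_ne_zero]
          exact (hedge _ _ _).mpr (Or.inr (Or.inr (Or.inl ⟨f, rfl, rfl, rfl⟩)))
        · norm_num
          exact (hedge _ _ _).mpr (Or.inr (Or.inr (Or.inr ⟨e, rfl, rfl, rfl⟩)))
      · intro m m' hmm hm2
        have hm0 : m = 0 := by omega
        have hm1 : m' = 1 := by omega
        subst hm0 hm1
        have h01 : 2 * π f < 2 * π e + 1 := by omega
        simpa using h01
  refine ⟨h1, h2, ?_⟩
  constructor
  · rintro ⟨ha, hb⟩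
    exact hπinj (le_antisymm (h1.mp ha) (h2.mp hb))
  · rintro rfl
    exact ⟨h1.mpr le_rfl, h2.mpr le_rfl⟩
end

section
/- Let A and B be finite sets, let π : A → ℕ be injective with π(a) ≥ 1 for all a ∈ A, let h : B → A be any function, and let 𝒢 = (V, ℰ) be the directed temporal graph whose vertex set consists of pairwise distinct vertices corresponding to the elements of A, the elements of B, and two further vertices s₃, s₄, and whose temporal edges are exactly (a, s₃, 2π(a)−1) for a ∈ A, (s₃, b, 2π(h(b))) for b ∈ B, (b, s₄, 2π(h(b))−1) for b ∈ B, and (s₄, a, 2π(a)) for a ∈ A. Then for all a ∈ A and b ∈ B: (1) a reaches b if and only if π(a) ≤ π(h(b)); (2) b reaches a if and only if π(h(b)) ≤ π(a); and consequently (3) a and b are compatible if and only if h(b) = a. -/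

private lemma TemporalGraph.hasWalk_two {V : Type*} (G : TemporalGraph V) {u w v : V}
    {t₁ t₂ : ℕ} (h1 : (u, w, t₁) ∈ G.edges) (h2 : (w, v, t₂) ∈ G.edges) (ht : t₁ < t₂) :
    G.HasWalk u v := by
  refine ⟨2, fun m => if m = 0 then u else if m = 1 then w else v,
    fun m => if m = 0 then t₁ else t₂, one_le_two, rfl, rfl, ?_, ?_, fun _ _ => Set.mem_univ _⟩
  · intro m hm
    interval_cases m
    · exact h1
    · exact h2
  · intro m m' hmm' hm'
    have hm0 : m = 0 ∧ m' = 1 := by omega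
    simp [hm0.1, hm0.2, ht]

/-- The local incidence gadget: with pairwise distinct vertices `va a` (`a ∈ A`),
`vb b` (`b ∈ B`), `s₃`, `s₄` and edges `(va a, s₃, 2π(a)−1)`, `(s₃, vb b, 2π(h b))`,
`(vb b, s₄, 2π(h b)−1)`, `(s₄, va a, 2π(a))`, we have `va a ⤳ vb b` iff
`π a ≤ π (h b)`, `vb b ⤳ va a` iff `π (h b) ≤ π a`, and `va a` and `vb b` are
compatible iff `h b = a`. -/
theorem incidence_gadget {A B V : Type*} [Fintype A] [Fintype B] [Fintype V]
    (π : A → ℕ) (hπinj : Function.Injective π) (hπ1 : ∀ a, 1 ≤ π a)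
    (h : B → A)
    (va : A → V) (vb : B → V) (s₃ s₄ : V)
    (hva : Function.Injective va) (hvb : Function.Injective vb)
    (hab : ∀ a b, va a ≠ vb b)
    (has : ∀ a, va a ≠ s₃ ∧ va a ≠ s₄) (hbs : ∀ b, vb b ≠ s₃ ∧ vb b ≠ s₄)
    (hs : s₃ ≠ s₄)
    (G : TemporalGraph V)
    (hV : G.verts = Set.range va ∪ Set.range vb ∪ {s₃, s₄})
    (hE : G.edges =
      {x | ∃ a : A, x = (va a, s₃, 2 * π a - 1)} ∪
      {x | ∃ b : B, x = (s₃, vb b, 2 * π (h b))} ∪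
      {x | ∃ b : B, x = (vb b, s₄, 2 * π (h b) - 1)} ∪
      {x | ∃ a : A, x = (s₄, va a, 2 * π a)}) :
    ∀ (a : A) (b : B),
      (G.Reaches (va a) (vb b) ↔ π a ≤ π (h b)) ∧
      (G.Reaches (vb b) (va a) ↔ π (h b) ≤ π a) ∧
      (G.Compatible (va a) (vb b) ↔ h b = a) := by
  have edge_class : ∀ u v t : _, ((u, v, t) : V × V × ℕ) ∈ G.edges →
      (∃ a, u = va a ∧ v = s₃ ∧ t = 2 * π a - 1) ∨
      (∃ b, u = s₃ ∧ v = vb b ∧ t = 2 * π (h b)) ∨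
      (∃ b, u = vb b ∧ v = s₄ ∧ t = 2 * π (h b) - 1) ∨
      (∃ a, u = s₄ ∧ v = va a ∧ t = 2 * π a) := by
    intro u v t hm
    rw [hE] at hm
    rcases hm with ((⟨a', ha'⟩ | ⟨b', hb'⟩) | ⟨b', hb'⟩) | ⟨a', ha'⟩
    · exact Or.inl ⟨a', by simpa [Prod.ext_iff] using ha'⟩
    · exact Or.inr (Or.inl ⟨b', by simpa [Prod.ext_iff] using hb'⟩)
    · exact Or.inr (Or.inr (Or.inl ⟨b', by simpa [Prod.ext_iff] using hb'⟩))
    · exact Or.inr (Or.inr (Or.inr ⟨a', by simpa [Prod.ext_iff] using ha'⟩))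
  have fwd_nec : ∀ a b, G.HasWalk (va a) (vb b) → π a ≤ π (h b) := by
    rintro a b ⟨n, f, t, hn, hf0, hfn, hedge, hmono, -⟩
    have e0 := hedge 0 (by omega)
    rw [hf0] at e0
    rcases edge_class _ _ _ e0 with ⟨a', h1, h2, h3⟩ | ⟨b', h1, -, -⟩ | ⟨b', h1, -, -⟩ | ⟨a', h1, -, -⟩
    · have ha' : π a' = π a := by rw [hva h1.symm]
      have hn2 : 2 ≤ n := by
        by_contra hc
        have hn1 : n = 1 := by omega
        rw [hn1] at hfn
        exact (hbs b).1 (hfn ▸ h2.symm ▸ rfl)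
      have e1 := hedge 1 (by omega)
      rw [h2] at e1
      rcases edge_class _ _ _ e1 with ⟨a₂, g1, -, -⟩ | ⟨b₂, g1, g2, g3⟩ | ⟨b₂, g1, -, -⟩ | ⟨a₂, g1, -, -⟩
      · exact absurd g1.symm (has a₂).1
      · by_cases hn3 : n = 2
        · subst hn3
          have hb2 : π (h b₂) = π (h b) := by rw [hvb (g2.symm.trans hfn)]
          have ht01 := hmono 0 1 (by omega) (by omega)
          have := hπ1 a'
          have := hπ1 (h b₂)
          omega
        · have e2 := hedge 2 (by omega)
          rw [g2] at e2
          rcases edge_class _ _ _ e2 with ⟨a₃, k1, -, -⟩ | ⟨b₃, k1, -, -⟩ | ⟨b₃, k1, -, k3⟩ | ⟨a₃, k1, -, -⟩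
          · exact absurd k1.symm (hab a₃ b₂)
          · exact absurd k1 (hbs b₂).1
          · have hb3 : π (h b₃) = π (h b₂) := by rw [hvb k1.symm]
            have := hmono 1 2 (by omega) (by omega)
            have := hπ1 (h b₃)
            omega
          · exact absurd k1 (hbs b₂).2
      · exact absurd g1.symm (hbs b₂).1
      · exact absurd g1 hs
    · exact absurd h1 (has a).1
    · exact absurd h1 (hab a b')
    · exact absurd h1 (has a).2
  have bwd_nec : ∀ a b, G.HasWalk (vb b) (va a) → π (h b) ≤ π a := by
    rintro a b ⟨n, f, t, hn, hf0, hfn, hedge, hmono, -⟩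
    have e0 := hedge 0 (by omega)
    rw [hf0] at e0
    rcases edge_class _ _ _ e0 with ⟨a', h1, -, -⟩ | ⟨b', h1, -, -⟩ | ⟨b', h1, h2, h3⟩ | ⟨a', h1, -, -⟩
    · exact absurd h1.symm (hab a' b)
    · exact absurd h1 (hbs b).1
    · have hb' : π (h b') = π (h b) := by rw [hvb h1.symm]
      have hn2 : 2 ≤ n := by
        by_contra hc
        have hn1 : n = 1 := by omega
        rw [hn1] at hfn
        exact (has a).2 (hfn ▸ h2.symm ▸ rfl)
      have e1 := hedge 1 (by omega)
      rw [h2] at e1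
      rcases edge_class _ _ _ e1 with ⟨a₂, g1, -, -⟩ | ⟨b₂, g1, -, -⟩ | ⟨b₂, g1, -, -⟩ | ⟨a₂, g1, g2, g3⟩
      · exact absurd g1.symm (has a₂).2
      · exact absurd g1.symm hs
      · exact absurd g1.symm (hbs b₂).2
      · by_cases hn3 : n = 2
        · subst hn3
          have ha2 : π a₂ = π a := by rw [hva (g2.symm.trans hfn)]
          have ht01 := hmono 0 1 (by omega) (by omega)
          have := hπ1 a₂
          have := hπ1 (h b')
          omega
        · have e2 := hedge 2 (by omega)
          rw [g2] at e2
          rcases edge_class _ _ _ e2 with ⟨a₃, k1, -, k3⟩ | ⟨b₃, k1, -, -⟩ | ⟨b₃, k1, -, -⟩ | ⟨a₃, k1, -, -⟩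
          · have ha3 : π a₃ = π a₂ := by rw [hva k1.symm]
            have := hmono 1 2 (by omega) (by omega)
            have := hπ1 a₃
            omega
          · exact absurd k1 (has a₂).1
          · exact absurd k1 (hab a₂ b₃)
          · exact absurd k1 (has a₂).2
    · exact absurd h1 (hbs b).2
  have fwd_suff : ∀ a b, π a ≤ π (h b) → G.HasWalk (va a) (vb b) := by
    intro a b hle
    have m1 : ((va a, s₃, 2 * π a - 1) : V × V × ℕ) ∈ G.edges := by
      rw [hE]
      exact Set.mem_union_left _ (Set.mem_union_left _ (Set.mem_union_left _ ⟨a, rfl⟩))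
    have m2 : ((s₃, vb b, 2 * π (h b)) : V × V × ℕ) ∈ G.edges := by
      rw [hE]
      exact Set.mem_union_left _ (Set.mem_union_left _ (Set.mem_union_right _ ⟨b, rfl⟩))
    exact G.hasWalk_two m1 m2 (by have := hπ1 a; omega)
  have bwd_suff : ∀ a b, π (h b) ≤ π a → G.HasWalk (vb b) (va a) := by
    intro a b hle
    have m1 : ((vb b, s₄, 2 * π (h b) - 1) : V × V × ℕ) ∈ G.edges := by
      rw [hE]
      exact Set.mem_union_left _ (Set.mem_union_right _ ⟨b, rfl⟩)
    have m2 : ((s₄, va a, 2 * π a) : V × V × ℕ) ∈ G.edges := by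
      rw [hE]
      exact Set.mem_union_right _ ⟨a, rfl⟩
    exact G.hasWalk_two m1 m2 (by have := hπ1 (h b); omega)
  intro a b
  have iff1 : G.Reaches (va a) (vb b) ↔ π a ≤ π (h b) := by
    constructor
    · rintro (heq | hw)
      · exact absurd heq (hab a b)
      · exact fwd_nec a b hw
    · intro hle
      exact Or.inr (fwd_suff a b hle)
  have iff2 : G.Reaches (vb b) (va a) ↔ π (h b) ≤ π a := by
    constructor
    · rintro (heq | hw)
      · exact absurd heq.symm (hab a b)
      · exact bwd_nec a b hw
    · intro hle
      exact Or.inr (bwd_suff a b hle)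
  refine ⟨iff1, iff2, ?_⟩
  constructor
  · rintro ⟨r1, r2⟩
    have l1 := iff1.1 r1
    have l2 := iff2.1 r2
    exact hπinj (le_antisymm l2 l1)
  · rintro rfl
    exact ⟨iff1.2 le_rfl, iff2.2 le_rfl⟩
end

section
/- Let 𝒢 = (V, ℰ) be a directed temporal graph, let S ⊆ V be nonempty, and let α < ω be time labels such that: (a) for all distinct s, s′ ∈ S, both (s, s′, α) ∈ ℰ and (s, s′, ω) ∈ ℰ; (b) every temporal edge of 𝒢 having at least one endpoint outside S has a label t with α < t < ω; and (c) for every v ∈ V ∖ S there exist s′, s″ ∈ S and labels t′, t″ with (s′, v, t′) ∈ ℰ and (v, s″, t″) ∈ ℰ. Then every s ∈ S is compatible with every vertex of 𝒢. -/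
lemma walk_one {V : Type*} (G : TemporalGraph V) {u v : V} {t : ℕ}
    (h : (u, v, t) ∈ G.edges) : G.HasWalk u v := by
  refine ⟨1, fun m => match m with | 0 => u | _ => v, fun _ => t, le_refl 1, rfl, rfl,
    ?_, ?_, fun _ _ => Set.mem_univ _⟩
  · intro m hm
    interval_cases m
    exact h
  · intro m m' hmm' hm'
    omega

lemma walk_two {V : Type*} (G : TemporalGraph V) {u w v : V} {t₁ t₂ : ℕ}
    (h₁ : (u, w, t₁) ∈ G.edges) (h₂ : (w, v, t₂) ∈ G.edges) (ht : t₁ < t₂) :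
    G.HasWalk u v := by
  refine ⟨2, fun m => match m with | 0 => u | 1 => w | _ => v,
    fun m => if m = 0 then t₁ else t₂, by norm_num, rfl, rfl,
    ?_, ?_, fun _ _ => Set.mem_univ _⟩
  · intro m hm
    interval_cases m
    · simpa using h₁
    · simpa using h₂
  · intro m m' hmm' hm'
    have : m = 0 ∧ m' = 1 := by omega
    obtain ⟨rfl, rfl⟩ := this
    simpa using ht

/-- Universal separator vertices: if the vertices of `S` are mutually joined by
edges at times `α` and `ω`, every edge with an endpoint outside `S` has a label
strictly between `α` and `ω`, and every vertex outside `S` has an incoming edge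
from `S` and an outgoing edge to `S`, then every vertex of `S` is compatible with
every vertex of the graph. -/
theorem separator_universal {V : Type*} [Fintype V] (G : TemporalGraph V)
    (S : Set V) (hSsub : S ⊆ G.verts) (hSne : S.Nonempty)
    (α ω : ℕ) (hαω : α < ω)
    (ha : ∀ s ∈ S, ∀ s' ∈ S, s ≠ s' →
      (s, s', α) ∈ G.edges ∧ (s, s', ω) ∈ G.edges)
    (hb : ∀ e ∈ G.edges, (e.1 ∉ S ∨ e.2.1 ∉ S) → α < e.2.2 ∧ e.2.2 < ω)
    (hc : ∀ v ∈ G.verts \ S,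
      (∃ s' ∈ S, ∃ t' : ℕ, (s', v, t') ∈ G.edges) ∧
      (∃ s'' ∈ S, ∃ t'' : ℕ, (v, s'', t'') ∈ G.edges)) :
    ∀ s ∈ S, ∀ v ∈ G.verts, G.Compatible s v := by
  intro s hs v hv
  by_cases hsv : s = v
  · exact ⟨Or.inl hsv, Or.inl hsv.symm⟩
  by_cases hvS : v ∈ S
  · exact ⟨Or.inr (walk_one G (ha s hs v hvS hsv).1),
      Or.inr (walk_one G (ha v hvS s hs (Ne.symm hsv)).1)⟩
  · obtain ⟨⟨s', hs', t', he'⟩, ⟨s'', hs'', t'', he''⟩⟩ := hc v ⟨hv, hvS⟩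
    constructor
    · by_cases hss' : s = s'
      · exact Or.inr (walk_one G (hss' ▸ he'))
      · have hαt' : α < t' := (hb _ he' (Or.inr hvS)).1
        exact Or.inr (walk_two G (ha s hs s' hs' hss').1 he' hαt')
    · by_cases hss'' : s'' = s
      · exact Or.inr (walk_one G (hss'' ▸ he''))
      · have ht''ω : t'' < ω := (hb _ he'' (Or.inl hvS)).2
        exact Or.inr (walk_two G he'' (ha s'' hs'' s hs hss'').2 ht''ω)
end

section
/- Let A₁, …, A_k be pairwise disjoint finite nonempty sets of vertices, let s be a vertex not belonging to any Aᵢ, and let 𝒢 = (V, ℰ) be the directed temporal graph on V = {s} ∪ A₁ ∪ … ∪ A_k whose temporal edges are exactly (s, y, 2i−1) for every i ∈ {1, …, k} and y ∈ Aᵢ, and (x, s, 2i) for every i ∈ {1, …, k} and x ∈ Aᵢ. Then for all i, j ∈ {1, …, k}, x ∈ Aᵢ and y ∈ A_j with x ≠ y: x reaches y if and only if i < j. In particular, no two distinct vertices lying in the same set Aᵢ are compatible. -/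
/-- The hub arrangement at a separator vertex `s`: with pairwise disjoint nonempty
groups `A 0, …, A (k-1)` and edges `(s, y, 2i+1)` for `y ∈ A i` and `(x, s, 2i+2)`
for `x ∈ A i` (the `1`-indexed labels `2i−1` and `2i` of the paper), a vertex of
`A i` reaches a different vertex of `A j` iff `i < j`; in particular no two
distinct vertices of the same group are compatible. -/
theorem hub_arrangement {V : Type*} [Fintype V] (k : ℕ)
    (A : Fin k → Set V) (hne : ∀ i, (A i).Nonempty)
    (hdisj : ∀ i j, i ≠ j → Disjoint (A i) (A j))
    (s : V) (hs : ∀ i, s ∉ A i)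
    (G : TemporalGraph V)
    (hV : G.verts = {s} ∪ ⋃ i, A i)
    (hE : G.edges =
      {x | ∃ (i : Fin k) (y : V), y ∈ A i ∧ x = (s, y, 2 * (i : ℕ) + 1)} ∪
      {x | ∃ (i : Fin k) (y : V), y ∈ A i ∧ x = (y, s, 2 * (i : ℕ) + 2)}) :
    (∀ (i j : Fin k), ∀ x ∈ A i, ∀ y ∈ A j, x ≠ y → (G.Reaches x y ↔ i < j)) ∧
    (∀ i : Fin k, ∀ x ∈ A i, ∀ y ∈ A i, x ≠ y → ¬ G.Compatible x y) := by
  have key : ∀ (i j : Fin k), ∀ x ∈ A i, ∀ y ∈ A j, x ≠ y → (G.Reaches x y ↔ i < j) := by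
    intro i j x hx y hy hxy
    constructor
    · rintro (rfl | ⟨n, f, t, hn, hf0, hfn, hedge, hmono, -⟩)
      · exact absurd rfl hxy
      have h0 := hedge 0 (by omega)
      rw [hf0, hE] at h0
      rcases h0 with ⟨i', y', hy', heq⟩ | ⟨i', y', hy', heq⟩
      · exfalso
        simp only [Prod.mk.injEq] at heq
        exact hs i (heq.1 ▸ hx)
      · simp only [Prod.mk.injEq] at heq
        obtain ⟨hxy', hf1, ht0⟩ := heq
        have hii' : (i' : ℕ) = (i : ℕ) := by
          by_contra h
          exact Set.disjoint_left.mp (hdisj i' i (fun he => h (by rw [he])))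
            (hxy' ▸ hy') hx
        have h1 := hedge (n - 1) (by omega)
        have hn1 : n - 1 + 1 = n := by omega
        rw [hn1, hfn, hE] at h1
        rcases h1 with ⟨j', y2, hy2, heq⟩ | ⟨j', y2, hy2, heq⟩
        · simp only [Prod.mk.injEq] at heq
          obtain ⟨hfs, hyy2, htn⟩ := heq
          have hjj' : (j' : ℕ) = (j : ℕ) := by
            by_contra h
            exact Set.disjoint_left.mp (hdisj j' j (fun he => h (by rw [he])))
              (hyy2 ▸ hy2) hy
          have hn2 : 2 ≤ n := by
            by_contra h
            have hne1 : n = 1 := by omega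
            rw [hne1] at hfn
            rw [hf1] at hfn
            exact hs j (hfn ▸ hy)
          have hlt := hmono 0 (n - 1) (by omega) (by omega)
          rw [ht0, htn] at hlt
          rw [Fin.lt_def]
          omega
        · exfalso
          simp only [Prod.mk.injEq] at heq
          exact hs j (heq.2.1 ▸ hy)
    · intro hij
      have hij' : (i : ℕ) < (j : ℕ) := hij
      right
      refine ⟨2, fun m => if m = 0 then x else if m = 1 then s else y,
        fun m => if m = 0 then 2 * (i : ℕ) + 2 else 2 * (j : ℕ) + 1,
        by omega, by norm_num, by norm_num, ?_, ?_, fun _ _ => trivial⟩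
      · intro m hm
        rw [hE]
        interval_cases m
        · norm_num
          exact Or.inr ⟨i, x, hx, rfl, rfl⟩
        · norm_num
          exact Or.inl ⟨j, y, hy, rfl, rfl⟩
      · intro m m' hmm' hm'
        have h01 : m = 0 ∧ m' = 1 := by omega
        obtain ⟨rfl, rfl⟩ := h01
        norm_num
        omega
  refine ⟨key, fun i x hx y hy hxy hc => ?_⟩
  exact lt_irrefl i ((key i i x hx y hy hxy).mp hc.1)
end

section
/- Let 𝒢 = (V, ℰ) be a directed temporal graph, and construct the undirected temporal graph 𝒢* as follows: the vertex set of 𝒢* is V together with one new helper vertex h_e for each temporal edge e ∈ ℰ (all helpers pairwise distinct and distinct from V), and for each temporal edge e = (x, y, t) ∈ ℰ the undirected temporal edges of 𝒢* are ({x, h_e}, 2t) and ({h_e, y}, 2t+1); these are all temporal edges of 𝒢*. Then for all u, v ∈ V: u reaches v in 𝒢* (with respect to undirected strict temporal walks) if and only if u reaches v in 𝒢 (with respect to directed strict temporal walks). -/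
/-- An undirected temporal graph: a symmetric set of temporal edges. -/
structure UTemporalGraph (W : Type*) where
  verts : Set W
  edges : Set (W × W × ℕ)
  symm : ∀ a b t, (a, b, t) ∈ edges → (b, a, t) ∈ edges
  edge_ne : ∀ e ∈ edges, e.1 ≠ e.2.1
  edge_mem_fst : ∀ e ∈ edges, e.1 ∈ verts
  edge_mem_snd : ∀ e ∈ edges, e.2.1 ∈ verts

/-- `u` reaches `v` in an undirected temporal graph: `u = v` or there is a strict
temporal walk from `u` to `v`. -/
def UTemporalGraph.Reaches {W : Type*} (H : UTemporalGraph W) (u v : W) : Prop :=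
  u = v ∨ ∃ (n : ℕ) (f : ℕ → W) (t : ℕ → ℕ),
    1 ≤ n ∧ f 0 = u ∧ f n = v ∧
    (∀ m, m < n → (f m, f (m + 1), t m) ∈ H.edges) ∧
    (∀ m m', m < m' → m' < n → t m < t m')

/-- Directed-to-undirected simulation: replacing every directed temporal edge
`e = (x, y, t)` by the undirected temporal edges `{x, h_e}` at time `2t` and
`{h_e, y}` at time `2t+1` through a fresh helper vertex `h_e` preserves
reachability between original vertices. -/
theorem directed_to_undirected_simulation {V : Type*} [Fintype V]
    (G : TemporalGraph V) (H : UTemporalGraph (V ⊕ (V × V × ℕ)))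
    (hverts : H.verts = Set.range Sum.inl ∪ Sum.inr '' G.edges)
    (hedges : H.edges = {p | ∃ e ∈ G.edges,
        p = (Sum.inl e.1, Sum.inr e, 2 * e.2.2) ∨
        p = (Sum.inr e, Sum.inl e.1, 2 * e.2.2) ∨
        p = (Sum.inr e, Sum.inl e.2.1, 2 * e.2.2 + 1) ∨
        p = (Sum.inl e.2.1, Sum.inr e, 2 * e.2.2 + 1)}) :
    ∀ u v : V, H.Reaches (Sum.inl u) (Sum.inl v) ↔ G.Reaches u v := by

  -- Edge inversion lemmas.
  have hinl : ∀ (a : V) (X : V ⊕ (V × V × ℕ)) (τ : ℕ), (Sum.inl a, X, τ) ∈ H.edges →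
      ∃ e ∈ G.edges, X = Sum.inr e ∧
        ((a = e.1 ∧ τ = 2 * e.2.2) ∨ (a = e.2.1 ∧ τ = 2 * e.2.2 + 1)) := by
    intro a X τ h
    rw [hedges] at h
    obtain ⟨e, he, h⟩ := h
    refine ⟨e, he, ?_⟩
    rcases h with h | h | h | h <;>
      simp only [Prod.mk.injEq, Sum.inl.injEq] at h <;>
      first
        | exact ⟨h.2.1, Or.inl ⟨h.1, h.2.2⟩⟩
        | exact ⟨h.2.1, Or.inr ⟨h.1, h.2.2⟩⟩
        | exact absurd h.1 (by simp)
  have hinr : ∀ (e : V × V × ℕ) (X : V ⊕ (V × V × ℕ)) (τ : ℕ),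
      (Sum.inr e, X, τ) ∈ H.edges →
      e ∈ G.edges ∧
        ((X = Sum.inl e.1 ∧ τ = 2 * e.2.2) ∨ (X = Sum.inl e.2.1 ∧ τ = 2 * e.2.2 + 1)) := by
    intro e X τ h
    rw [hedges] at h
    obtain ⟨e', he', h⟩ := h
    rcases h with h | h | h | h <;>
      simp only [Prod.mk.injEq, Sum.inr.injEq] at h
    · exact absurd h.1 (by simp)
    · obtain ⟨rfl, h2, h3⟩ := h; exact ⟨he', Or.inl ⟨h2, h3⟩⟩
    · obtain ⟨rfl, h2, h3⟩ := h; exact ⟨he', Or.inr ⟨h2, h3⟩⟩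
    · exact absurd h.1 (by simp)
  -- Key extraction lemma (hard direction).
  have key : ∀ n (F : ℕ → V ⊕ (V × V × ℕ)) (T : ℕ → ℕ) (u v : V),
      1 ≤ n → F 0 = Sum.inl u → F n = Sum.inl v →
      (∀ m, m < n → (F m, F (m + 1), T m) ∈ H.edges) →
      (∀ m m', m < m' → m' < n → T m < T m') →
      ∃ (M : ℕ) (g : ℕ → V) (s : ℕ → ℕ),
        1 ≤ M ∧ g 0 = u ∧ g M = v ∧
        (∀ m, m < M → (g m, g (m + 1), s m) ∈ G.edges) ∧
        (∀ m m', m < m' → m' < M → s m < s m') ∧ 2 * s 0 = T 0 := by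
    intro n
    induction n using Nat.strong_induction_on with
    | _ n IH =>
      intro F T u v hn h0 hnv hE hT
      have e0 : (F 0, F 1, T 0) ∈ H.edges := hE 0 hn
      rw [h0] at e0
      obtain ⟨e, he, hF1, hcase⟩ := hinl u (F 1) (T 0) e0
      have hn2 : 2 ≤ n := by
        by_contra h
        have : n = 1 := by omega
        rw [this] at hnv
        rw [hnv] at hF1
        exact absurd hF1 (by simp)
      have e1 : (F 1, F 2, T 1) ∈ H.edges := hE 1 (by omega)
      rw [hF1] at e1
      obtain ⟨-, hcase1⟩ := hinr e (F 2) (T 1) e1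
      have hT01 : T 0 < T 1 := hT 0 1 (by omega) (by omega)
      have hu : u = e.1 ∧ T 0 = 2 * e.2.2 := by
        rcases hcase with h | h
        · exact h
        · rcases hcase1 with h1 | h1 <;> omega
      have hF2 : F 2 = Sum.inl e.2.1 ∧ T 1 = 2 * e.2.2 + 1 := by
        rcases hcase1 with h1 | h1
        · omega
        · exact h1
      have heu : (u, e.2.1, e.2.2) ∈ G.edges := by
        have : e = (u, e.2.1, e.2.2) := by rw [hu.1]
        rw [← this]; exact he
      rcases eq_or_lt_of_le hn2 with hn2' | hn3
      · -- n = 2, single directed edge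
        have hv : e.2.1 = v := by
          rw [← hn2'] at hnv
          rw [hnv] at hF2
          exact (Sum.inl.inj hF2.1.symm)
        refine ⟨1, fun i => if i = 0 then u else v, fun _ => e.2.2, le_refl 1, by simp, by simp, ?_, ?_, ?_⟩
        · intro m hm
          have : m = 0 := by omega
          subst this
          simpa [hv] using heu
        · intro m m' h1 h2; omega
        · exact hu.2.symm
      · -- n ≥ 3, recurse
        obtain ⟨M, g, s, hM, hg0, hgM, hgE, hgT, hs0⟩ :=
          IH (n - 2) (by omega) (fun i => F (i + 2)) (fun i => T (i + 2)) e.2.1 v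
            (by omega) hF2.1 (by show F (n - 2 + 2) = Sum.inl v; rw [(by omega : n - 2 + 2 = n)]; exact hnv)
            (by intro m hm
                have : m + 2 + 1 = m + 3 := rfl
                exact hE (m + 2) (by omega))
            (by intro m m' h1 h2; exact hT (m + 2) (m' + 2) (by omega) (by omega))
        have hs0' : e.2.2 < s 0 := by
          have h2 : T 1 < T 2 := hT 1 2 (by omega) (by omega)
          have hs02 : 2 * s 0 = T 2 := hs0
          have h3 := hF2.2
          omega
        refine ⟨M + 1, fun i => match i with | 0 => u | j + 1 => g j,
          fun i => match i with | 0 => e.2.2 | j + 1 => s j, by omega, rfl, hgM, ?_, ?_, ?_⟩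
        · intro m hm
          match m with
          | 0 => simpa [hg0] using heu
          | j + 1 => exact hgE j (by omega)
        · intro m m' h1 h2
          match m, m' with
          | 0, 0 => omega
          | 0, j + 1 =>
            rcases Nat.eq_zero_or_pos j with rfl | hj
            · exact hs0'
            · exact lt_trans hs0' (hgT 0 j hj (by omega))
          | i + 1, 0 => omega
          | i + 1, j + 1 => exact hgT i j (by omega) (by omega)
        · show 2 * e.2.2 = T 0; exact hu.2.symm
  intro u v
  constructor
  · rintro (huv | ⟨n, F, T, hn, h0, hnv, hE, hT⟩)
    · exact Or.inl (Sum.inl.inj huv)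
    · obtain ⟨M, g, s, hM, hg0, hgM, hgE, hgT, -⟩ := key n F T u v hn h0 hnv hE hT
      exact Or.inr ⟨M, g, s, hM, hg0, hgM, hgE, hgT, fun m _ => Set.mem_univ _⟩
  · rintro (rfl | ⟨n, f, t, hn, h0, hnv, hE, hT, -⟩)
    · exact Or.inl rfl
    · right
      refine ⟨2 * n,
        fun m => if m % 2 = 0 then Sum.inl (f (m / 2))
          else Sum.inr (f (m / 2), f (m / 2 + 1), t (m / 2)),
        fun m => if m % 2 = 0 then 2 * t (m / 2) else 2 * t (m / 2) + 1,
        by omega, by simp [h0], ?_, ?_, ?_⟩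
      · have h1 : (2 * n) % 2 = 0 := by omega
        have h2 : (2 * n) / 2 = n := by omega
        simp [h1, h2, hnv]
      · intro m hm
        rcases Nat.even_or_odd m with ⟨i, hi⟩ | ⟨i, hi⟩
        · subst hi
          have p1 : (i + i) % 2 = 0 := by omega
          have p2 : (i + i) / 2 = i := by omega
          have p3 : (i + i + 1) % 2 = 1 := by omega
          have p4 : (i + i + 1) / 2 = i := by omega
          simp only [p1, p2, p3, p4, if_pos rfl]
          rw [hedges]
          exact ⟨(f i, f (i + 1), t i), hE i (by omega), by norm_num⟩
        · subst hi
          have p1 : (2 * i + 1) % 2 = 1 := by omega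
          have p2 : (2 * i + 1) / 2 = i := by omega
          have p3 : (2 * i + 1 + 1) % 2 = 0 := by omega
          have p4 : (2 * i + 1 + 1) / 2 = i + 1 := by omega
          simp only [p1, p2, p3, p4]
          norm_num
          rw [hedges]
          exact ⟨(f i, f (i + 1), t i), hE i (by omega), by norm_num⟩
      · have loc : ∀ m, m + 1 < 2 * n →
            (if m % 2 = 0 then 2 * t (m / 2) else 2 * t (m / 2) + 1) <
            (if (m + 1) % 2 = 0 then 2 * t ((m + 1) / 2) else 2 * t ((m + 1) / 2) + 1) := by
          intro m hm
          rcases Nat.even_or_odd m with ⟨i, hi⟩ | ⟨i, hi⟩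
          · subst hi
            have p1 : (i + i) % 2 = 0 := by omega
            have p2 : (i + i) / 2 = i := by omega
            have p3 : (i + i + 1) % 2 = 1 := by omega
            have p4 : (i + i + 1) / 2 = i := by omega
            simp [p1, p2, p3, p4]
          · subst hi
            have p1 : (2 * i + 1) % 2 = 1 := by omega
            have p2 : (2 * i + 1) / 2 = i := by omega
            have p3 : (2 * i + 1 + 1) % 2 = 0 := by omega
            have p4 : (2 * i + 1 + 1) / 2 = i + 1 := by omega
            have : t i < t (i + 1) := hT i (i + 1) (by omega) (by omega)
            simp [p1, p2, p3, p4]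
            omega
        have chain : ∀ m' m, m < m' → m' < 2 * n →
            (if m % 2 = 0 then 2 * t (m / 2) else 2 * t (m / 2) + 1) <
            (if m' % 2 = 0 then 2 * t (m' / 2) else 2 * t (m' / 2) + 1) := by
          intro m'
          induction m' with
          | zero => intro m h1 h2; omega
          | succ k IHk =>
            intro m h1 h2
            rcases Nat.lt_or_ge m k with h3 | h3
            · exact lt_trans (IHk m h3 (by omega)) (loc k h2)
            · have : m = k := by omega
              subst this
              exact loc m h2
        intro m m' h1 h2
        exact chain m' m h1 h2
end

section
/- Let V be a finite set equipped with a linear order ≺, and let P₁, …, P_k be finite sequences of pairwise distinct elements of V, each of which is monotone with respect to ≺ (its elements appear in strictly increasing or strictly decreasing ≺-order). Let G be the finite simple graph on V whose edges are exactly the pairs of consecutive elements of the sequences P₁, …, P_k. Then G has treewidth at most k. -/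
/-
Order the vertices by `≺` and use the path decomposition whose bag at `x` consists of `x` and of
the vertices before `x` that have a neighbour at or after `x`. An edge of `G` jumping over the
cut before `x` is an edge of some `Pᵢ`, and a monotone path jumps over a given cut at most once,
so each bag has at most `k + 1` vertices.
-/

/-- A tree decomposition of a simple graph `G`: a tree `T` with a bag of vertices
of `G` at each node, such that every vertex and every edge of `G` is covered by
some bag, and for each vertex the set of nodes whose bags contain it induces a
connected subtree. -/
structure TreeDecomposition {V : Type*} (G : SimpleGraph V) where
  ι : Type
  tree : SimpleGraph ι
  isTree : tree.IsTree
  bag : ι → Set V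
  mem_bag : ∀ v : V, ∃ u, v ∈ bag u
  edge_bag : ∀ ⦃v w : V⦄, G.Adj v w → ∃ u, v ∈ bag u ∧ w ∈ bag u
  bag_connected : ∀ v : V, (tree.induce {u | v ∈ bag u}).Connected

/-- `G` has treewidth at most `w`: it admits a tree decomposition all of whose
bags are finite of size at most `w + 1`. -/
def SimpleGraph.treewidthLE {V : Type*} (G : SimpleGraph V) (w : ℕ) : Prop :=
  ∃ D : TreeDecomposition G, ∀ u, (D.bag u).Finite ∧ (D.bag u).ncard ≤ w + 1

theorem le_iff_le_of_covBy_of_ne {α : Type*} [LinearOrder α] {a b x y : α} (hab : a ⋖ b)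
    (hxy : x ⋖ y) (hne : s(x, y) ≠ s(a, b)) : x ≤ a ↔ y ≤ a := by
  refine ⟨fun hxa => ?_, fun hya => hxy.lt.le.trans hya⟩
  rcases hxa.lt_or_eq with hxa | rfl
  · exact hxy.ge_of_gt hxa
  · exact absurd (congrArg _ (hxy.unique_right hab)) hne

theorem exists_monotone_surjective_nat (α : Type*) [LinearOrder α] [Finite α] [Nonempty α] :
    ∃ f : ℕ → α, Monotone f ∧ Function.Surjective f := by
  have := Fintype.ofFinite α
  have hn : 0 < Fintype.card α := Fintype.card_pos
  let e : Fin (Fintype.card α) ≃o α := monoEquivOfFin α rfl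
  refine ⟨fun t => e ⟨min t (Fintype.card α - 1), by omega⟩, fun s t hst => ?_, fun v => ?_⟩
  · exact e.monotone (Fin.mk_le_mk.mpr (min_le_min_right _ hst))
  · refine ⟨e.symm v, ?_⟩
    have hv : (e.symm v : ℕ) ≤ Fintype.card α - 1 := Nat.le_sub_one_of_lt (e.symm v).2
    simp only [min_eq_left hv, Fin.eta, e.apply_symm_apply]

theorem Set.ncard_iUnion_le_of_subsingleton {ι α : Type*} [Fintype ι] {s : ι → Set α}
    (hs : ∀ i, (s i).Subsingleton) : (⋃ i, s i).ncard ≤ Fintype.card ι :=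
  calc (⋃ i, s i).ncard = (⋃ i ∈ Finset.univ, s i).ncard := by simp
    _ ≤ ∑ i, (s i).ncard := Finset.set_ncard_biUnion_le _ _
    _ ≤ ∑ _ : ι, 1 := Finset.sum_le_sum fun i _ => (Set.ncard_le_one (hs i).finite).mpr (hs i)
    _ = Fintype.card ι := by simp

namespace SimpleGraph

variable {α : Type*} [LinearOrder α]

theorem isAcyclic_hasse : (hasse α).IsAcyclic := by
  refine isAcyclic_iff_forall_adj_isBridge.mpr fun a b hab => ?_
  wlog hcov : a ⋖ b generalizing a b
  · rw [Sym2.eq_swap]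
    exact this b a hab.symm (hab.resolve_left hcov)
  rw [isBridge_iff]
  rintro ⟨p⟩
  -- Deleting the edge `a ⋖ b` leaves no edge between `Set.Iic a` and its complement.
  have hstep : ∀ x y, ((hasse α).deleteEdges {s(a, b)}).Adj x y → (x ≤ a ↔ y ≤ a) := by
    intro x y hxy
    rw [deleteEdges_adj, Set.mem_singleton_iff] at hxy
    obtain ⟨hxy | hyx, hne⟩ := hxy
    · exact le_iff_le_of_covBy_of_ne hcov hxy hne
    · rw [Sym2.eq_swap] at hne
      exact (le_iff_le_of_covBy_of_ne hcov hyx hne).symm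
  have hwalk : ∀ {x y}, ((hasse α).deleteEdges {s(a, b)}).Walk x y → (x ≤ a ↔ y ≤ a) := by
    intro x y q
    induction q with
    | nil => rfl
    | cons h _ ih => exact (hstep _ _ h).trans ih
  exact hcov.lt.not_ge ((hwalk p).mp le_rfl)

theorem isTree_hasse_nat : (hasse ℕ).IsTree :=
  ⟨⟨hasse_preconnected_of_succ ℕ⟩, isAcyclic_hasse⟩

theorem connected_induce_hasse_nat {s : Set ℕ} (hne : s.Nonempty) (hs : s.OrdConnected) :
    ((hasse ℕ).induce s).Connected := by
  have hmin : sInf s ∈ s := Nat.sInf_mem hne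
  suffices h : ∀ t (ht : t ∈ s), ((hasse ℕ).induce s).Reachable ⟨sInf s, hmin⟩ ⟨t, ht⟩ by
    have : Nonempty s := hne.to_subtype
    exact ⟨fun x y => (h x x.2).symm.trans (h y y.2)⟩
  intro t ht
  induction t, Nat.sInf_le ht using Nat.le_induction with
  | base => rfl
  | succ t hle ih =>
    have ht' : t ∈ s := hs.out hmin ht ⟨hle, t.le_succ⟩
    exact (ih ht').trans (Adj.reachable (Or.inl (Order.covBy_succ t)))

variable {V : Type*} {G : SimpleGraph V} {w : ℕ}

theorem treewidthLE_of_nat_bags (B : ℕ → Set V)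
    (hedge : ∀ ⦃u v⦄, G.Adj u v → ∃ t, u ∈ B t ∧ v ∈ B t)
    (hnonempty : ∀ v, {t | v ∈ B t}.Nonempty) (hconv : ∀ v, {t | v ∈ B t}.OrdConnected)
    (hcard : ∀ t, (B t).Finite ∧ (B t).ncard ≤ w + 1) : G.treewidthLE w :=
  ⟨⟨ℕ, hasse ℕ, isTree_hasse_nat, B, hnonempty, hedge,
    fun v => connected_induce_hasse_nat (hnonempty v) (hconv v)⟩, hcard⟩

theorem treewidthLE_of_vertex_bags [LinearOrder V] [Finite V] (B : V → Set V)
    (hmem : ∀ v, v ∈ B v) (hedge : ∀ ⦃u v⦄, G.Adj u v → ∃ x, u ∈ B x ∧ v ∈ B x)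
    (hconv : ∀ v, {x | v ∈ B x}.OrdConnected) (hcard : ∀ x, (B x).ncard ≤ w + 1) :
    G.treewidthLE w := by
  cases isEmpty_or_nonempty V
  · exact treewidthLE_of_nat_bags (fun _ => ∅) (fun u => isEmptyElim u) isEmptyElim
      isEmptyElim fun _ => by simp
  obtain ⟨f, hf, hsurj⟩ := exists_monotone_surjective_nat V
  refine treewidthLE_of_nat_bags (B ∘ f) (fun u v huv => ?_) (fun v => ?_)
    (fun v => (hconv v).preimage_mono hf) fun t => ⟨Set.toFinite _, hcard _⟩
  · obtain ⟨x, hx⟩ := hedge huv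
    obtain ⟨t, rfl⟩ := hsurj x
    exact ⟨t, hx⟩
  · obtain ⟨t, ht⟩ := hsurj v
    exact ⟨t, show v ∈ B (f t) from ht ▸ hmem v⟩

def innerBoundary (G : SimpleGraph V) (s : Set V) : Set V := {a ∈ s | ∃ b ∉ s, G.Adj a b}

theorem innerBoundary_mono {H : SimpleGraph V} (h : G ≤ H) (s : Set V) :
    G.innerBoundary s ⊆ H.innerBoundary s :=
  fun _ ⟨ha, b, hb, hab⟩ => ⟨ha, b, hb, h hab⟩

theorem innerBoundary_iSup {ι : Sort*} (G : ι → SimpleGraph V) (s : Set V) :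
    (⨆ i, G i).innerBoundary s = ⋃ i, (G i).innerBoundary s := by
  ext a
  simp only [innerBoundary, iSup_adj, Set.mem_iUnion, Set.mem_ofPred_eq]
  grind

theorem treewidthLE_of_ncard_innerBoundary_Iio_le [LinearOrder V] [Finite V]
    (h : ∀ x, (G.innerBoundary (Set.Iio x)).ncard ≤ w) : G.treewidthLE w := by
  refine treewidthLE_of_vertex_bags (fun x => insert x (G.innerBoundary (Set.Iio x)))
    (fun v => Set.mem_insert v _) (fun u v huv => ?_) (fun v => ⟨?_⟩)
    fun x => (Set.ncard_insert_le _ _).trans (Nat.add_le_add_right (h x) 1)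
  · simp only [innerBoundary, Set.mem_insert_iff, Set.mem_ofPred_eq, Set.mem_Iio, not_lt]
    rcases lt_or_gt_of_ne huv.ne with huv' | huv'
    · exact ⟨v, Or.inr ⟨huv', v, le_rfl, huv⟩, Or.inl rfl⟩
    · exact ⟨u, Or.inl rfl, Or.inr ⟨huv', u, le_rfl, huv.symm⟩⟩
  · simp only [innerBoundary, Set.mem_insert_iff, Set.mem_ofPred_eq, Set.mem_Iio, not_lt]
    intro x hx y hy z ⟨hxz, hzy⟩
    have hvx : v ≤ x := hx.elim Eq.le fun h => h.1.le
    obtain rfl | hvz := (hvx.trans hxz).eq_or_lt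
    · exact Or.inl rfl
    obtain rfl | ⟨-, b, hyb, hvb⟩ := hy
    · exact absurd (hvz.trans_le hzy) (lt_irrefl _)
    · exact Or.inr ⟨hvz, b, hzy.trans hyb, hvb⟩

end SimpleGraph

namespace List

variable {α : Type*}

theorem infix_getElem_getElem_succ (l : List α) (m : ℕ) (hm : m + 1 < l.length) :
    [l[m], l[m + 1]] <:+: l :=
  ⟨l.take m, l.drop (m + 2), by
    rw [append_assoc, cons_append, cons_append, nil_append, ← drop_eq_getElem_cons,
      ← drop_eq_getElem_cons, take_append_drop]⟩

def chainGraph (l : List α) : SimpleGraph α := SimpleGraph.fromRel fun a b => [a, b] <:+: l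

variable {l : List α} {a b c : α}

theorem mem_of_chainGraph_adj (h : l.chainGraph.Adj a b) : a ∈ l := by
  rcases ((SimpleGraph.fromRel_adj _ _ _).mp h).2 with h | h <;> exact h.subset (by simp)

@[simp]
theorem chainGraph_reverse (l : List α) : l.reverse.chainGraph = l.chainGraph := by
  have hinfix : ∀ a b, [a, b] <:+: l.reverse ↔ [b, a] <:+: l := fun a b => by
    simpa using reverse_infix (l₁ := [b, a]) (l₂ := l)
  ext a b
  simp only [chainGraph, SimpleGraph.fromRel_adj, hinfix, or_comm]

variable [LinearOrder α]

theorem Pairwise.notMem_Ioo_of_infix (hl : l.Pairwise (· < ·)) (hab : [a, b] <:+: l)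
    (hc : c ∈ l) : c ∉ Set.Ioo a b := by
  obtain ⟨s, t, rfl⟩ := hab
  rintro ⟨hac, hcb⟩
  simp only [pairwise_append, pairwise_cons, mem_append, mem_cons, forall_eq_or_imp, forall_eq,
    not_mem_nil, or_false] at hl hc
  obtain ⟨⟨-, -, hs⟩, -, ht⟩ := hl
  rcases hc with (hcs | rfl | rfl) | hct
  · exact (hs c hcs).1.not_gt hac
  · exact lt_irrefl c hac
  · exact lt_irrefl c hcb
  · exact (ht b (by simp) c hct).not_gt hcb

theorem Pairwise.infix_of_chainGraph_adj (hl : l.Pairwise (· < ·)) (h : l.chainGraph.Adj a b)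
    (hab : a < b) : [a, b] <:+: l := by
  refine ((SimpleGraph.fromRel_adj _ _ _).mp h).2.resolve_right fun hba => ?_
  exact hab.not_gt (pairwise_pair.mp (hl.sublist hba.sublist))

theorem Pairwise.subsingleton_innerBoundary_Iio (hl : l.Pairwise (· < ·)) (x : α) :
    (l.chainGraph.innerBoundary (Set.Iio x)).Subsingleton := by
  suffices h : ∀ a a', a ∈ l.chainGraph.innerBoundary (Set.Iio x) →
      a' ∈ l.chainGraph.innerBoundary (Set.Iio x) → a ≤ a' from
    fun a ha a' ha' => le_antisymm (h a a' ha ha') (h a' a ha' ha)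
  rintro a a' ⟨hax, _, -, hab⟩ ⟨ha'x, b', hxb', ha'b'⟩
  rw [Set.mem_Iio, not_lt] at hxb'
  exact not_lt.mp fun ha'a => hl.notMem_Ioo_of_infix
    (hl.infix_of_chainGraph_adj ha'b' (ha'x.trans_le hxb')) (mem_of_chainGraph_adj hab)
    ⟨ha'a, hax.trans_le hxb'⟩

theorem subsingleton_innerBoundary_Iio_chainGraph (hl : l.Pairwise (· < ·) ∨ l.Pairwise (· > ·))
    (x : α) : (l.chainGraph.innerBoundary (Set.Iio x)).Subsingleton := by
  rcases hl with hl | hl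
  · exact hl.subsingleton_innerBoundary_Iio x
  · rw [← chainGraph_reverse]
    exact (pairwise_reverse.mpr hl).subsingleton_innerBoundary_Iio x

end List

theorem monotone_paths_treewidth_general {V : Type*} [Fintype V] [LinearOrder V] (k : ℕ)
    (P : Fin k → List V)
    (hmono : ∀ i, (P i).Pairwise (· < ·) ∨ (P i).Pairwise (· > ·))
    (G : SimpleGraph V)
    (hadj : ∀ u v : V, G.Adj u v ↔ u ≠ v ∧
      ∃ (i : Fin k) (m : ℕ) (hm : m + 1 < (P i).length),
        (((P i).get ⟨m, Nat.lt_of_succ_lt hm⟩ = u ∧ (P i).get ⟨m + 1, hm⟩ = v) ∨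
         ((P i).get ⟨m, Nat.lt_of_succ_lt hm⟩ = v ∧ (P i).get ⟨m + 1, hm⟩ = u))) :
    G.treewidthLE k := by
  have hle : G ≤ ⨆ i, (P i).chainGraph := by
    intro u v huv
    obtain ⟨hne, i, m, hm, h⟩ := (hadj u v).mp huv
    refine SimpleGraph.iSup_adj.mpr ⟨i, (SimpleGraph.fromRel_adj _ _ _).mpr ⟨hne, ?_⟩⟩
    simp only [List.get_eq_getElem] at h
    rcases h with ⟨rfl, rfl⟩ | ⟨rfl, rfl⟩
    exacts [Or.inl ((P i).infix_getElem_getElem_succ m hm),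
      Or.inr ((P i).infix_getElem_getElem_succ m hm)]
  refine G.treewidthLE_of_ncard_innerBoundary_Iio_le fun x => ?_
  calc (G.innerBoundary (Set.Iio x)).ncard
      ≤ (⋃ i, (P i).chainGraph.innerBoundary (Set.Iio x)).ncard := by
        rw [← SimpleGraph.innerBoundary_iSup]
        exact Set.ncard_le_ncard (SimpleGraph.innerBoundary_mono hle _)
    _ ≤ k := by
      simpa using Set.ncard_iUnion_le_of_subsingleton fun i =>
        List.subsingleton_innerBoundary_Iio_chainGraph (hmono i) x

/-- The footprint of a monotone `k`-path temporal graph has treewidth at most `k`: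
if each list `P i` is duplicate-free and monotone with respect to a linear order on
`V`, then the graph whose edges are exactly the pairs of consecutive elements of
the lists has treewidth at most `k`. -/
theorem monotone_paths_treewidth {V : Type*} [Fintype V] [LinearOrder V] (k : ℕ)
    (P : Fin k → List V)
    (hnodup : ∀ i, (P i).Nodup)
    (hmono : ∀ i, (P i).Pairwise (· < ·) ∨ (P i).Pairwise (· > ·))
    (G : SimpleGraph V)
    (hadj : ∀ u v : V, G.Adj u v ↔ u ≠ v ∧
      ∃ (i : Fin k) (m : ℕ) (hm : m + 1 < (P i).length),
        (((P i).get ⟨m, Nat.lt_of_succ_lt hm⟩ = u ∧ (P i).get ⟨m + 1, hm⟩ = v) ∨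
         ((P i).get ⟨m, Nat.lt_of_succ_lt hm⟩ = v ∧ (P i).get ⟨m + 1, hm⟩ = u))) :
    G.treewidthLE k :=
  monotone_paths_treewidth_general k P hmono G hadj
end
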